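/- arXiv:2604.04230 — 10 statements merged into one kernel-verified Lean document; each statement's English description precedes it below -/
import Mathlib

section
/- Let M ≥ 2, q : Fin M → ℝ, γ ≥ 0 and λ > 0, and let Φ_γ(μ)_i = exp((q_i − γ μ_i)/λ) / ∑_j exp((q_j − γ μ_j)/λ) be the softmax best-response map. A vector μ in the interior of the probability simplex Δ_M is the (unique) minimizer of the Rosenthal potential Ψ(μ) = ∑_i (−q_i μ_i + (γ/2) μ_i² + λ μ_i log μ_i) over Δ_M if and only if μ is a fixed point of Φ_γ, i.e. μ_i = exp((q_i − γ μ_i)/λ) / ∑_j exp((q_j − γ μ_j)/λ) for all i. In particular Φ_γ has exactly one fixed point in the interior of Δ_M. -/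
open Real Finset

private lemma mul_log_subgrad {a b : ℝ} (ha : 0 < a) (hb : 0 ≤ b) :
    a * log a + (log a + 1) * (b - a) ≤ b * log b := by
  rcases eq_or_lt_of_le hb with h0 | hb'
  · simp [← h0]; nlinarith
  · have h := Real.log_le_sub_one_of_pos (div_pos ha hb')
    rw [Real.log_div ha.ne' hb'.ne'] at h
    have h3 : b * (Real.log a - Real.log b) ≤ a - b := by
      have := mul_le_mul_of_nonneg_left h hb'.le
      have hab : b * (a / b) = a := by field_simp
      nlinarith
    nlinarith

private lemma mul_log_subgrad_strict {a b : ℝ} (ha : 0 < a) (hb : 0 ≤ b) (hab : b ≠ a) :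
    a * log a + (log a + 1) * (b - a) < b * log b := by
  rcases eq_or_lt_of_le hb with h0 | hb'
  · simp [← h0]; nlinarith
  · have hne : a / b ≠ 1 := fun h => hab ((div_eq_one_iff_eq hb'.ne').mp h).symm
    have h := Real.log_lt_sub_one_of_pos (div_pos ha hb') hne
    rw [Real.log_div ha.ne' hb'.ne'] at h
    have h3 : b * (Real.log a - Real.log b) < a - b := by
      have := mul_lt_mul_of_pos_left h hb'
      have hab2 : b * (a / b) = a := by field_simp
      nlinarith
    nlinarith

private noncomputable def Fgl (γ lam p x : ℝ) : ℝ := -p * x + γ / 2 * x ^ 2 + lam * (x * Real.log x)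
private noncomputable def Ggl (γ lam p x : ℝ) : ℝ := -p + γ * x + lam * (Real.log x + 1)

private lemma Fgl_subgrad {γ lam : ℝ} (hγ : 0 ≤ γ) (hlam : 0 < lam) (p : ℝ) {a b : ℝ}
    (ha : 0 < a) (hb : 0 ≤ b) :
    Fgl γ lam p a + Ggl γ lam p a * (b - a) ≤ Fgl γ lam p b := by
  have h1 := mul_log_subgrad ha hb
  have h2 := mul_le_mul_of_nonneg_left h1 hlam.le
  have h3 : 0 ≤ γ * (b - a) ^ 2 := mul_nonneg hγ (sq_nonneg _)
  simp only [Fgl, Ggl]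
  nlinarith

private lemma Fgl_subgrad_strict {γ lam : ℝ} (hγ : 0 ≤ γ) (hlam : 0 < lam) (p : ℝ) {a b : ℝ}
    (ha : 0 < a) (hb : 0 ≤ b) (hab : b ≠ a) :
    Fgl γ lam p a + Ggl γ lam p a * (b - a) < Fgl γ lam p b := by
  have h1 := mul_log_subgrad_strict ha hb hab
  have h2 := mul_lt_mul_of_pos_left h1 hlam
  have h3 : 0 ≤ γ * (b - a) ^ 2 := mul_nonneg hγ (sq_nonneg _)
  simp only [Fgl, Ggl]
  nlinarith

private lemma hasDerivAt_Fgl (γ lam p : ℝ) {x : ℝ} (hx : x ≠ 0) :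
    HasDerivAt (Fgl γ lam p) (Ggl γ lam p x) x := by
  have h1 : HasDerivAt (fun x : ℝ => -p * x) (-p) x := by
    simpa using (hasDerivAt_id x).const_mul (-p)
  have h2 : HasDerivAt (fun x : ℝ => γ / 2 * x ^ 2) (γ * x) x := by
    have := (hasDerivAt_pow 2 x).const_mul (γ / 2)
    convert this using 1
    · rfl
    · rfl
    push_cast; ring
  have h3 : HasDerivAt (fun x : ℝ => lam * (x * Real.log x)) (lam * (Real.log x + 1)) x :=
    (Real.hasDerivAt_mul_log hx).const_mul lam
  have h := (h1.add h2).add h3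
  have heq : Ggl γ lam p x = -p + γ * x + lam * (Real.log x + 1) := by simp [Ggl]
  rw [heq]; exact h
private def pert {M : ℕ} (μ : Fin M → ℝ) (i j : Fin M) (t : ℝ) : Fin M → ℝ :=
  fun k => if k = i then μ i + t else if k = j then μ j - t else μ k

private lemma sum_pert {M : ℕ} (μ : Fin M → ℝ) {i j : Fin M} (hij : i ≠ j) (t : ℝ)
    (h : Fin M → ℝ → ℝ) :
    ∑ k, h k (pert μ i j t k)
      = ∑ k, h k (μ k) + (h i (μ i + t) - h i (μ i)) + (h j (μ j - t) - h j (μ j)) := by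
  have key : ∑ k, (h k (pert μ i j t k) - h k (μ k))
      = (h i (μ i + t) - h i (μ i)) + (h j (μ j - t) - h j (μ j)) := by
    rw [← Finset.sum_subset (Finset.subset_univ ({i, j} : Finset (Fin M)))]
    · rw [Finset.sum_insert (by simpa using hij), Finset.sum_singleton]
      simp [pert, hij, hij.symm]
    · intro k _ hk
      simp only [Finset.mem_insert, Finset.mem_singleton, not_or] at hk
      simp [pert, hk.1, hk.2]
  rw [Finset.sum_sub_distrib] at key
  linarith

private lemma sum_pert_eq_one {M : ℕ} {μ : Fin M → ℝ} {i j : Fin M} (hij : i ≠ j) (t : ℝ)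
    (hsum : ∑ k, μ k = 1) : ∑ k, pert μ i j t k = 1 := by
  have := sum_pert μ hij t (fun _ x => x)
  rw [this, hsum]; ring

private lemma const_G_of_fixed {M : ℕ} (hM : 0 < M) (q : Fin M → ℝ) {γ lam : ℝ}
    (hlam : 0 < lam) {μ : Fin M → ℝ}
    (hfix : ∀ i, μ i = Real.exp ((q i - γ * μ i) / lam) / ∑ j, Real.exp ((q j - γ * μ j) / lam)) :
    (∀ i, 0 < μ i) ∧ ∃ c, ∀ i, Ggl γ lam (q i) (μ i) = c := by
  have : Nonempty (Fin M) := ⟨⟨0, hM⟩⟩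
  set S := ∑ j, Real.exp ((q j - γ * μ j) / lam) with hS_def
  have hS : 0 < S := Finset.sum_pos (fun j _ => Real.exp_pos _) Finset.univ_nonempty
  have hpos : ∀ i, 0 < μ i := fun i => by
    rw [hfix i]; exact div_pos (Real.exp_pos _) hS
  refine ⟨hpos, lam * (1 - Real.log S), fun i => ?_⟩
  have hlog : Real.log (μ i) = (q i - γ * μ i) / lam - Real.log S := by
    conv_lhs => rw [hfix i]
    rw [Real.log_div (Real.exp_ne_zero _) hS.ne', Real.log_exp]
  simp only [Ggl, hlog]
  field_simp
  ring

private lemma fixed_of_const_G {M : ℕ} (q : Fin M → ℝ) {γ lam : ℝ} (hlam : 0 < lam)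
    {μ : Fin M → ℝ} (hpos : ∀ i, 0 < μ i) (hsum : ∑ i, μ i = 1)
    {c : ℝ} (hc : ∀ i, Ggl γ lam (q i) (μ i) = c) :
    ∀ i, μ i = Real.exp ((q i - γ * μ i) / lam) / ∑ j, Real.exp ((q j - γ * μ j) / lam) := by
  have hlog : ∀ i, Real.log (μ i) = (q i - γ * μ i) / lam + (c - lam) / lam := by
    intro i
    have h := hc i
    simp only [Ggl] at h
    field_simp
    nlinarith [h]
  have hμ : ∀ i, μ i = Real.exp ((q i - γ * μ i) / lam) * Real.exp ((c - lam) / lam) := by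
    intro i
    rw [← Real.exp_add, ← hlog i, Real.exp_log (hpos i)]
  set S := ∑ j, Real.exp ((q j - γ * μ j) / lam) with hS_def
  have hS : 0 < S := by
    have : Nonempty (Fin M) := by
      rcases Nat.eq_zero_or_pos M with h | h
      · exfalso; subst h; simp at hsum
      · exact ⟨⟨0, h⟩⟩
    exact Finset.sum_pos (fun j _ => Real.exp_pos _) Finset.univ_nonempty
  have hSK : S * Real.exp ((c - lam) / lam) = 1 := by
    rw [hS_def, Finset.sum_mul, ← hsum]
    exact Finset.sum_congr rfl fun i _ => (hμ i).symm
  have hK : Real.exp ((c - lam) / lam) = 1 / S := eq_one_div_of_mul_eq_one_left (by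
    rw [mul_comm]; exact hSK)
  intro i
  conv_lhs => rw [hμ i]
  rw [hK, mul_one_div]
private lemma min_of_const_G {M : ℕ} (q : Fin M → ℝ) {γ lam : ℝ} (hγ : 0 ≤ γ)
    (hlam : 0 < lam) {μ ν : Fin M → ℝ}
    (hμpos : ∀ i, 0 < μ i) (hμsum : ∑ i, μ i = 1)
    (hνnn : ∀ i, 0 ≤ ν i) (hνsum : ∑ i, ν i = 1)
    {c : ℝ} (hc : ∀ i, Ggl γ lam (q i) (μ i) = c) :
    ∑ i, Fgl γ lam (q i) (μ i) ≤ ∑ i, Fgl γ lam (q i) (ν i) := by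
  have h1 : ∀ i ∈ Finset.univ, Fgl γ lam (q i) (μ i) + c * (ν i - μ i) ≤ Fgl γ lam (q i) (ν i) :=
    fun i _ => by rw [← hc i]; exact Fgl_subgrad hγ hlam (q i) (hμpos i) (hνnn i)
  have h2 := Finset.sum_le_sum h1
  rw [Finset.sum_add_distrib, ← Finset.mul_sum, Finset.sum_sub_distrib, hνsum, hμsum] at h2
  simpa using h2

private lemma min_of_const_G_strict {M : ℕ} (q : Fin M → ℝ) {γ lam : ℝ} (hγ : 0 ≤ γ)
    (hlam : 0 < lam) {μ ν : Fin M → ℝ}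
    (hμpos : ∀ i, 0 < μ i) (hμsum : ∑ i, μ i = 1)
    (hνnn : ∀ i, 0 ≤ ν i) (hνsum : ∑ i, ν i = 1)
    {c : ℝ} (hc : ∀ i, Ggl γ lam (q i) (μ i) = c) (hne : ν ≠ μ) :
    ∑ i, Fgl γ lam (q i) (μ i) < ∑ i, Fgl γ lam (q i) (ν i) := by
  obtain ⟨i0, hi0⟩ := Function.ne_iff.mp hne
  have h1 : ∀ i ∈ Finset.univ, Fgl γ lam (q i) (μ i) + c * (ν i - μ i) ≤ Fgl γ lam (q i) (ν i) :=
    fun i _ => by rw [← hc i]; exact Fgl_subgrad hγ hlam (q i) (hμpos i) (hνnn i)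
  have h2 : ∃ i ∈ Finset.univ, Fgl γ lam (q i) (μ i) + c * (ν i - μ i) < Fgl γ lam (q i) (ν i) :=
    ⟨i0, Finset.mem_univ _, by
      rw [← hc i0]; exact Fgl_subgrad_strict hγ hlam (q i0) (hμpos i0) (hνnn i0) hi0⟩
  have h3 := Finset.sum_lt_sum h1 h2
  rw [Finset.sum_add_distrib, ← Finset.mul_sum, Finset.sum_sub_distrib, hνsum, hμsum] at h3
  simpa using h3

private lemma const_G_of_min {M : ℕ} (q : Fin M → ℝ) {γ lam : ℝ} (hlam : 0 < lam)
    {μ : Fin M → ℝ} (hpos : ∀ i, 0 < μ i) (hsum : ∑ i, μ i = 1)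
    (hmin : ∀ ν : Fin M → ℝ, (∀ i, 0 ≤ ν i) → ∑ i, ν i = 1 →
      ∑ k, Fgl γ lam (q k) (μ k) ≤ ∑ k, Fgl γ lam (q k) (ν k))
    {i j : Fin M} (hij : i ≠ j) :
    Ggl γ lam (q i) (μ i) = Ggl γ lam (q j) (μ j) := by
  set φ : ℝ → ℝ := fun t => Fgl γ lam (q i) (μ i + t) + Fgl γ lam (q j) (μ j - t) with hφ_def
  have h1 : HasDerivAt (fun t : ℝ => μ i + t) 1 0 := by
    simpa using (hasDerivAt_id (0 : ℝ)).const_add (μ i)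
  have h2 : HasDerivAt (fun t : ℝ => μ j - t) (-1) 0 := by
    simpa using (hasDerivAt_id (0 : ℝ)).const_sub (μ j)
  have hfi : HasDerivAt (Fgl γ lam (q i)) (Ggl γ lam (q i) (μ i)) ((fun t : ℝ => μ i + t) 0) := by
    simpa using hasDerivAt_Fgl γ lam (q i) (hpos i).ne'
  have hfj : HasDerivAt (Fgl γ lam (q j)) (Ggl γ lam (q j) (μ j)) ((fun t : ℝ => μ j - t) 0) := by
    simpa using hasDerivAt_Fgl γ lam (q j) (hpos j).ne'
  have hA := hfi.comp (0 : ℝ) h1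
  have hB := hfj.comp (0 : ℝ) h2
  have hφ : HasDerivAt φ (Ggl γ lam (q i) (μ i) * 1 + Ggl γ lam (q j) (μ j) * -1) 0 :=
    hA.add hB
  have hm : 0 < min (μ i) (μ j) := lt_min (hpos i) (hpos j)
  have hloc : IsLocalMin φ 0 := by
    have hmem : Set.Ioo (-(min (μ i) (μ j))) (min (μ i) (μ j)) ∈ nhds (0 : ℝ) :=
      Ioo_mem_nhds (by linarith) hm
    refine Filter.eventually_of_mem hmem fun t ht => ?_
    obtain ⟨ht1, ht2⟩ := ht
    have hνnn : ∀ k, 0 ≤ pert μ i j t k := by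
      intro k
      simp only [pert]
      split_ifs with h h'
      · have := min_le_left (μ i) (μ j); linarith
      · have := min_le_right (μ i) (μ j); linarith
      · exact (hpos k).le
    have hνsum := sum_pert_eq_one hij t hsum
    have := hmin _ hνnn hνsum
    rw [sum_pert μ hij t (fun k x => Fgl γ lam (q k) x)] at this
    simp only [hφ_def]
    simp only [add_zero, sub_zero]
    linarith
  have := hloc.hasDerivAt_eq_zero hφ
  linarith

private lemma exists_min {M : ℕ} (hM : 0 < M) (f : (Fin M → ℝ) → ℝ) (hf : Continuous f) :
    ∃ μ : Fin M → ℝ, ((∀ i, 0 ≤ μ i) ∧ ∑ i, μ i = 1) ∧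
      ∀ ν : Fin M → ℝ, (∀ i, 0 ≤ ν i) → ∑ i, ν i = 1 → f μ ≤ f ν := by
  set S : Set (Fin M → ℝ) := {μ | (∀ i, 0 ≤ μ i) ∧ ∑ i, μ i = 1} with hS_def
  have hclosed : IsClosed S := by
    rw [hS_def, Set.setOf_and]
    refine IsClosed.inter ?_ ?_
    · rw [Set.setOf_forall]
      exact isClosed_iInter fun i => isClosed_le continuous_const (continuous_apply i)
    · exact isClosed_eq (continuous_finset_sum _ fun i _ => continuous_apply i) continuous_const
  have hsub : S ⊆ Metric.closedBall 0 1 := by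
    intro μ hμ
    rw [Metric.mem_closedBall, dist_zero_right]
    rw [pi_norm_le_iff_of_nonneg zero_le_one]
    intro i
    rw [Real.norm_eq_abs, abs_of_nonneg (hμ.1 i)]
    calc μ i ≤ ∑ k, μ k := Finset.single_le_sum (fun k _ => hμ.1 k) (Finset.mem_univ i)
      _ = 1 := hμ.2
  have hcpt : IsCompact S := (isCompact_closedBall 0 1).of_isClosed_subset hclosed hsub
  have hne : S.Nonempty := by
    refine ⟨fun _ => (M : ℝ)⁻¹, fun i => by positivity, ?_⟩
    have hM' : (M : ℝ) ≠ 0 := Nat.cast_ne_zero.mpr hM.ne'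
    simp [Finset.sum_const, Finset.card_univ]
    field_simp
  obtain ⟨μ, hμS, hμmin⟩ := hcpt.exists_isMinOn hne hf.continuousOn
  exact ⟨μ, hμS, fun ν h1 h2 => hμmin ⟨h1, h2⟩⟩
private lemma pos_of_min {M : ℕ} (q : Fin M → ℝ) {γ lam : ℝ} (hγ : 0 ≤ γ) (hlam : 0 < lam)
    {μ : Fin M → ℝ} (hnn : ∀ i, 0 ≤ μ i) (hsum : ∑ i, μ i = 1)
    (hmin : ∀ ν : Fin M → ℝ, (∀ i, 0 ≤ ν i) → ∑ i, ν i = 1 →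
      ∑ k, Fgl γ lam (q k) (μ k) ≤ ∑ k, Fgl γ lam (q k) (ν k)) :
    ∀ i, 0 < μ i := by
  intro i
  rcases (hnn i).lt_or_eq with h | h
  · exact h
  exfalso
  have hμi : μ i = 0 := h.symm
  have hj : ∃ j, 0 < μ j := by
    by_contra hcon
    push_neg at hcon
    have hz : ∀ k, μ k = 0 := fun k => le_antisymm (hcon k) (hnn k)
    rw [Finset.sum_congr rfl fun k _ => hz k] at hsum
    simp at hsum
  obtain ⟨j, hjpos⟩ := hj
  have hij : i ≠ j := by
    intro hh
    rw [hh] at hμi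
    exact hjpos.ne' hμi
  have hb : 0 < μ j := hjpos
  set C : ℝ := |q j| + γ * μ j + lam * (|Real.log (μ j / 2)| + |Real.log (μ j)| + 1) with hC_def
  set t : ℝ := min (μ j / 2) (Real.exp (-(C + |q i| + γ * μ j + 1) / lam)) with ht_def
  have ht0 : 0 < t := lt_min (by linarith) (Real.exp_pos _)
  have htb : t ≤ μ j / 2 := min_le_left _ _
  have hlogt : lam * Real.log t ≤ -(C + |q i| + γ * μ j + 1) := by
    have h1 : Real.log t ≤ -(C + |q i| + γ * μ j + 1) / lam := by
      calc Real.log t ≤ Real.log (Real.exp (-(C + |q i| + γ * μ j + 1) / lam)) :=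
            Real.log_le_log ht0 (min_le_right _ _)
        _ = -(C + |q i| + γ * μ j + 1) / lam := Real.log_exp _
    calc lam * Real.log t ≤ lam * (-(C + |q i| + γ * μ j + 1) / lam) :=
          mul_le_mul_of_nonneg_left h1 hlam.le
      _ = -(C + |q i| + γ * μ j + 1) := by field_simp
  have hνnn : ∀ k, 0 ≤ pert μ i j t k := by
    intro k
    simp only [pert]
    split_ifs with h1 h2
    · linarith
    · linarith
    · exact hnn k
  have hνsum := sum_pert_eq_one hij t hsum
  have hle := hmin _ hνnn hνsum
  rw [sum_pert μ hij t (fun k x => Fgl γ lam (q k) x)] at hle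
  have hΔ : 0 ≤ (Fgl γ lam (q i) (μ i + t) - Fgl γ lam (q i) (μ i))
      + (Fgl γ lam (q j) (μ j - t) - Fgl γ lam (q j) (μ j)) := by linarith
  have hF0 : Fgl γ lam (q i) (μ i) = 0 := by simp [Fgl, hμi]
  have hFt : Fgl γ lam (q i) (μ i + t)
      = -(q i) * t + γ / 2 * t ^ 2 + lam * (t * Real.log t) := by
    rw [hμi, zero_add]; simp [Fgl]
  have hbt : 0 < μ j - t := by linarith
  have hsg := Fgl_subgrad hγ hlam (q j) (a := μ j - t) (b := μ j) hbt (by linarith)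
  have hGb : |Ggl γ lam (q j) (μ j - t)| ≤ C := by
    have hlog1 : Real.log (μ j / 2) ≤ Real.log (μ j - t) :=
      Real.log_le_log (by linarith) (by linarith)
    have hlog2 : Real.log (μ j - t) ≤ Real.log (μ j) := Real.log_le_log hbt (by linarith)
    have e1 : |-(q j)| = |q j| := abs_neg _
    have e2 : |γ * (μ j - t)| ≤ γ * μ j := by
      rw [abs_of_nonneg (mul_nonneg hγ hbt.le)]
      exact mul_le_mul_of_nonneg_left (by linarith) hγ
    have e3 : |lam * (Real.log (μ j - t) + 1)|
        ≤ lam * (|Real.log (μ j / 2)| + |Real.log (μ j)| + 1) := by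
      rw [abs_mul, abs_of_pos hlam]
      have habs : |Real.log (μ j - t)| ≤ |Real.log (μ j / 2)| + |Real.log (μ j)| := by
        rw [abs_le]
        refine ⟨?_, ?_⟩
        · have h4 := neg_abs_le (Real.log (μ j / 2))
          have h5 := abs_nonneg (Real.log (μ j))
          linarith
        · have h4 := le_abs_self (Real.log (μ j))
          have h5 := abs_nonneg (Real.log (μ j / 2))
          linarith
      have h6 : |Real.log (μ j - t) + 1| ≤ |Real.log (μ j - t)| + 1 := by
        calc |Real.log (μ j - t) + 1| ≤ |Real.log (μ j - t)| + |(1 : ℝ)| := abs_add_le _ _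
          _ = |Real.log (μ j - t)| + 1 := by norm_num
      apply mul_le_mul_of_nonneg_left _ hlam.le
      linarith
    rw [hC_def]
    simp only [Ggl]
    calc |-(q j) + γ * (μ j - t) + lam * (Real.log (μ j - t) + 1)|
        ≤ |-(q j)| + |γ * (μ j - t)| + |lam * (Real.log (μ j - t) + 1)| := abs_add_three _ _ _
      _ ≤ |q j| + γ * μ j + lam * (|Real.log (μ j / 2)| + |Real.log (μ j)| + 1) := by
          rw [e1]; linarith
  have hsecond : Fgl γ lam (q j) (μ j - t) - Fgl γ lam (q j) (μ j) ≤ t * C := by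
    have h1 : Fgl γ lam (q j) (μ j - t) - Fgl γ lam (q j) (μ j)
        ≤ -(Ggl γ lam (q j) (μ j - t)) * t := by
      have : μ j - (μ j - t) = t := by ring
      nlinarith [hsg]
    have h2 : -(Ggl γ lam (q j) (μ j - t)) ≤ C :=
      le_trans (neg_le_abs _) hGb
    calc Fgl γ lam (q j) (μ j - t) - Fgl γ lam (q j) (μ j)
        ≤ -(Ggl γ lam (q j) (μ j - t)) * t := h1
      _ ≤ C * t := mul_le_mul_of_nonneg_right h2 ht0.le
      _ = t * C := mul_comm _ _
  -- final contradiction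
  have b1 : -(q i) * t ≤ |q i| * t := mul_le_mul_of_nonneg_right (neg_le_abs _) ht0.le
  have b2 : γ / 2 * t ^ 2 ≤ γ * μ j * t := by
    nlinarith [mul_le_mul_of_nonneg_left (mul_le_mul_of_nonneg_right htb ht0.le) hγ,
      mul_nonneg (mul_nonneg hγ ht0.le) hb.le]
  have b3 : lam * (t * Real.log t) ≤ -(t * C) - |q i| * t - γ * μ j * t - t := by
    calc lam * (t * Real.log t) = t * (lam * Real.log t) := by ring
      _ ≤ t * (-(C + |q i| + γ * μ j + 1)) := mul_le_mul_of_nonneg_left hlogt ht0.le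
      _ = -(t * C) - |q i| * t - γ * μ j * t - t := by ring
  rw [hF0, hFt] at hΔ
  linarith [hΔ, hsecond, b1, b2, b3, ht0]

/-- A vector `μ` in the interior of the simplex minimizes the Rosenthal
potential over the simplex if and only if it is a fixed point of the softmax
best-response map `Φ_γ`; in particular `Φ_γ` has exactly one fixed point in the
interior of the simplex. -/
theorem rosenthal_minimizer_iff_fixedPoint
    (M : ℕ) (hM : 2 ≤ M) (q : Fin M → ℝ) (γ : ℝ) (hγ : 0 ≤ γ)
    (lam : ℝ) (hlam : 0 < lam) :
    (∀ μ : Fin M → ℝ, (∀ i, 0 < μ i) → ∑ i, μ i = 1 →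
      ((∀ ν : Fin M → ℝ, (∀ i, 0 ≤ ν i) → ∑ i, ν i = 1 →
          (∑ i, (-(q i) * μ i + (γ / 2) * (μ i) ^ 2 + lam * (μ i * Real.log (μ i)))) ≤
          (∑ i, (-(q i) * ν i + (γ / 2) * (ν i) ^ 2 + lam * (ν i * Real.log (ν i)))))
        ↔
       (∀ i, μ i =
          Real.exp ((q i - γ * μ i) / lam) / ∑ j, Real.exp ((q j - γ * μ j) / lam))))
    ∧
    (∃! μ : Fin M → ℝ, (∀ i, 0 < μ i) ∧ ∑ i, μ i = 1 ∧
        ∀ i, μ i =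
          Real.exp ((q i - γ * μ i) / lam) / ∑ j, Real.exp ((q j - γ * μ j) / lam)) := by
  have hM0 : 0 < M := lt_of_lt_of_le two_pos hM
  -- the key iff, phrased via `Fgl`
  have key : ∀ μ : Fin M → ℝ, (∀ i, 0 < μ i) → ∑ i, μ i = 1 →
      ((∀ ν : Fin M → ℝ, (∀ i, 0 ≤ ν i) → ∑ i, ν i = 1 →
          ∑ k, Fgl γ lam (q k) (μ k) ≤ ∑ k, Fgl γ lam (q k) (ν k))
        ↔
       (∀ i, μ i =
          Real.exp ((q i - γ * μ i) / lam) / ∑ j, Real.exp ((q j - γ * μ j) / lam))) := by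
    intro μ hpos hsum
    constructor
    · intro hmin
      set i0 : Fin M := ⟨0, hM0⟩ with hi0_def
      have hc : ∀ i, Ggl γ lam (q i) (μ i) = Ggl γ lam (q i0) (μ i0) := by
        intro i
        by_cases hii : i = i0
        · rw [hii]
        · exact const_G_of_min q hlam hpos hsum hmin hii
      exact fixed_of_const_G q hlam hpos hsum hc
    · intro hfix
      obtain ⟨_, c, hc⟩ := const_G_of_fixed hM0 q hlam hfix
      intro ν h1 h2
      exact min_of_const_G q hγ hlam hpos hsum h1 h2 hc
  constructor
  · intro μ hpos hsum
    exact key μ hpos hsum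
  · -- existence and uniqueness
    have hcont : Continuous fun μ : Fin M → ℝ => ∑ k, Fgl γ lam (q k) (μ k) := by
      refine continuous_finset_sum _ fun i _ => ?_
      have h1 : Continuous fun μ : Fin M → ℝ => -(q i) * μ i :=
        continuous_const.mul (continuous_apply i)
      have h2 : Continuous fun μ : Fin M → ℝ => γ / 2 * μ i ^ 2 :=
        continuous_const.mul ((continuous_apply i).pow 2)
      have h3 : Continuous fun μ : Fin M → ℝ => lam * (μ i * Real.log (μ i)) :=
        continuous_const.mul (Real.continuous_mul_log.comp (continuous_apply i))
      exact (h1.add h2).add h3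
    obtain ⟨μ0, ⟨hnn, hsum⟩, hmin⟩ :=
      exists_min hM0 (fun μ => ∑ k, Fgl γ lam (q k) (μ k)) hcont
    have hpos : ∀ i, 0 < μ0 i := pos_of_min q hγ hlam hnn hsum hmin
    have hfix := (key μ0 hpos hsum).mp hmin
    refine ⟨μ0, ⟨hpos, hsum, hfix⟩, ?_⟩
    rintro ν ⟨hνpos, hνsum, hνfix⟩
    by_contra hne
    obtain ⟨_, cν, hcν⟩ := const_G_of_fixed hM0 q hlam hνfix
    obtain ⟨_, cμ, hcμ⟩ := const_G_of_fixed hM0 q hlam hfix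
    have h1 := min_of_const_G_strict q hγ hlam hpos hsum (fun i => (hνpos i).le) hνsum hcμ hne
    have h2 := min_of_const_G_strict q hγ hlam hνpos hνsum (fun i => (hpos i).le) hsum hcν
      (fun hh => hne hh.symm)
    linarith
end

section
/- Let M ≥ 2, q : Fin M → ℝ, γ > 0 and λ > 0, and let μ* in the interior of the probability simplex Δ_M satisfy the equilibrium condition μ*_i = exp((q_i − γ μ*_i)/λ) / ∑_j exp((q_j − γ μ*_j)/λ) for all i. Let B₀ = max_i q_i − min_i q_i be the expert quality spread. Then the maximum load satisfies max_i μ*_i ≤ 1/M + B₀/γ. -/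
/-- Anti-concentration: at an MFG equilibrium `μ*` with congestion
coefficient `γ > 0`, the maximum load satisfies
`max_i μ*_i ≤ 1/M + B₀/γ`, where `B₀ = max_i q_i − min_i q_i`. -/
theorem anti_concentration
    (M : ℕ) (hM : 2 ≤ M) (q : Fin M → ℝ) (γ : ℝ) (hγ : 0 < γ)
    (lam : ℝ) (hlam : 0 < lam)
    (μstar : Fin M → ℝ) (hpos : ∀ i, 0 < μstar i) (hsum : ∑ i, μstar i = 1)
    (heq : ∀ i, μstar i =
      Real.exp ((q i - γ * μstar i) / lam) / ∑ j, Real.exp ((q j - γ * μstar j) / lam)) :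
    (⨆ i, μstar i) ≤ 1 / (M : ℝ) + ((⨆ i, q i) - (⨅ i, q i)) / γ := by
  have hMpos : (0:ℝ) < M := by
    have : (0:ℕ) < M := by omega
    exact_mod_cast this
  have hne : Nonempty (Fin M) := ⟨⟨0, by omega⟩⟩
  have hbddA : BddAbove (Set.range q) := (Set.finite_range q).bddAbove
  have hbddB : BddBelow (Set.range q) := (Set.finite_range q).bddBelow
  have hqle : ∀ i : Fin M, q i ≤ ⨆ i, q i := fun i => le_ciSup hbddA i
  have hqge : ∀ i : Fin M, ⨅ i, q i ≤ q i := fun i => ciInf_le hbddB i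
  have hB0 : 0 ≤ (⨆ i, q i) - (⨅ i, q i) := by
    obtain ⟨i⟩ := hne
    linarith [hqle i, hqge i]
  have hS : 0 < ∑ j, Real.exp ((q j - γ * μstar j) / lam) :=
    Finset.sum_pos (fun j _ => Real.exp_pos _) Finset.univ_nonempty
  have key : ∀ i j : Fin M, γ * (μstar i - μstar j) ≤ (⨆ i, q i) - (⨅ i, q i) := by
    intro i j
    rcases le_or_gt (μstar i) (μstar j) with h | h
    · nlinarith
    · have hij : Real.exp ((q j - γ * μstar j) / lam) < Real.exp ((q i - γ * μstar i) / lam) := by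
        have h' := h
        rw [heq i, heq j] at h'
        have := mul_lt_mul_of_pos_right h' hS
        simpa [div_mul_cancel₀, ne_of_gt hS] using this
      have : (q j - γ * μstar j) / lam < (q i - γ * μstar i) / lam :=
        Real.exp_lt_exp.mp hij
      have h2 : q j - γ * μstar j ≤ q i - γ * μstar i := by
        have := (div_lt_div_iff_of_pos_right hlam).mp this
        linarith
      have := hqle i
      have := hqge j
      linarith
  have main : ∀ i : Fin M, μstar i ≤ 1 / (M : ℝ) + ((⨆ i, q i) - (⨅ i, q i)) / γ := by
    intro i
    have hsumkey : ∑ j, γ * (μstar i - μstar j) ≤ ∑ _j : Fin M, ((⨆ i, q i) - (⨅ i, q i)) :=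
      Finset.sum_le_sum fun j _ => key i j
    have hL : ∑ j, γ * (μstar i - μstar j) = γ * ((M : ℝ) * μstar i - 1) := by
      simp [Finset.mul_sum, Finset.sum_sub_distrib, hsum, Finset.sum_const, mul_sub,
        Finset.card_univ]
      rw [← Finset.mul_sum, hsum]
      ring
    have hR : ∑ _j : Fin M, ((⨆ i, q i) - (⨅ i, q i)) = (M : ℝ) * ((⨆ i, q i) - (⨅ i, q i)) := by
      simp [Finset.sum_const, Finset.card_univ]
      ring
    rw [hL, hR] at hsumkey
    rw [div_add_div _ _ (ne_of_gt hMpos) (ne_of_gt hγ), le_div_iff₀ (by positivity)]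
    nlinarith
  exact ciSup_le main
end

section
/- Let M ≥ 2, q : Fin M → ℝ, λ > 0, and let μ be in the interior of the probability simplex Δ_M with a unique index attaining min_i μ_i and with μ not equal to the point mass at that index. Define the residual R(γ) = ∑_i |Φ_γ(μ)_i − μ_i|, where Φ_γ(μ)_i = exp((q_i − γ μ_i)/λ) / ∑_j exp((q_j − γ μ_j)/λ). Then R is continuous on [0, ∞), lim_{γ→∞} R(γ) > 0, and R attains its infimum over [0, ∞): there exists γ_eff ≥ 0 with R(γ_eff) = inf_{γ ≥ 0} R(γ). -/
open Filter

private lemma exp_split (x y u v l : ℝ) (hl : l ≠ 0) :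
    Real.exp ((x - u) / l) = Real.exp ((x - y - (u - v)) / l) * Real.exp ((y - v) / l) := by
  rw [← Real.exp_add]
  congr 1
  field_simp
  ring

/-- The L¹ residual `R(γ) = ‖Φ_γ(μ) − μ‖₁` is continuous on `[0, ∞)`,
has a strictly positive limit as `γ → ∞` (when `μ` has a unique minimal entry and is
not the corresponding point mass), and attains its infimum over `[0, ∞)` at some
`γ_eff ≥ 0`. -/
theorem residual_attains_infimum
    (M : ℕ) (hM : 2 ≤ M) (q : Fin M → ℝ) (lam : ℝ) (hlam : 0 < lam)
    (μ : Fin M → ℝ) (hpos : ∀ i, 0 < μ i) (hsum : ∑ i, μ i = 1)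
    (jstar : Fin M) (hmin : ∀ i, i ≠ jstar → μ jstar < μ i)
    (hne : μ ≠ fun i => if i = jstar then (1 : ℝ) else 0) :
    ContinuousOn (fun γ : ℝ => ∑ i, |Real.exp ((q i - γ * μ i) / lam) /
        (∑ k, Real.exp ((q k - γ * μ k) / lam)) - μ i|) (Set.Ici 0)
    ∧
    (∃ L > 0, Tendsto (fun γ : ℝ => ∑ i, |Real.exp ((q i - γ * μ i) / lam) /
        (∑ k, Real.exp ((q k - γ * μ k) / lam)) - μ i|) atTop (nhds L))
    ∧
    (∃ γeff ≥ (0 : ℝ), ∀ γ ≥ (0 : ℝ),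
      (∑ i, |Real.exp ((q i - γeff * μ i) / lam) /
        (∑ k, Real.exp ((q k - γeff * μ k) / lam)) - μ i|) ≤
      (∑ i, |Real.exp ((q i - γ * μ i) / lam) /
        (∑ k, Real.exp ((q k - γ * μ k) / lam)) - μ i|)) := by
  have hM1 : 1 < Fintype.card (Fin M) := by rw [Fintype.card_fin]; omega
  haveI : Nonempty (Fin M) := ⟨jstar⟩
  set g : ℝ → Fin M → ℝ := fun γ i => Real.exp ((q i - γ * μ i) / lam) with hg
  have hD : ∀ γ, 0 < ∑ k, g γ k := fun γ =>
    Finset.sum_pos (fun k _ => Real.exp_pos _) ⟨jstar, Finset.mem_univ _⟩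
  set Φ : ℝ → Fin M → ℝ := fun γ i => g γ i / ∑ k, g γ k with hΦ
  set f : ℝ → ℝ := fun γ => ∑ i, |Φ γ i - μ i| with hf
  -- continuity
  have hcont : Continuous f := by
    apply continuous_finset_sum
    intro i _
    apply Continuous.abs
    apply Continuous.sub _ continuous_const
    apply Continuous.div
    · exact Real.continuous_exp.comp (by fun_prop)
    · exact continuous_finset_sum _ fun k _ =>
        Real.continuous_exp.comp (by fun_prop)
    · intro γ; exact (hD γ).ne'
  -- the auxiliary ratio representation
  set h : ℝ → Fin M → ℝ := fun γ k =>
    Real.exp ((q k - q jstar - γ * (μ k - μ jstar)) / lam) with hh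
  have hrat : ∀ γ k, g γ k = h γ k * g γ jstar := by
    intro γ k
    have e := exp_split (q k) (q jstar) (γ * μ k) (γ * μ jstar) lam hlam.ne'
    have e2 : γ * μ k - γ * μ jstar = γ * (μ k - μ jstar) := by ring
    rw [e2] at e
    exact e
  have hΦeq : ∀ γ i, Φ γ i = h γ i / ∑ k, h γ k := by
    intro γ i
    have hgj : g γ jstar ≠ 0 := (Real.exp_pos _).ne'
    rw [hΦ]
    simp only
    rw [hrat γ i]
    have : (∑ k, g γ k) = (∑ k, h γ k) * g γ jstar := by
      rw [Finset.sum_mul]; exact Finset.sum_congr rfl fun k _ => hrat γ k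
    rw [this, mul_div_mul_right _ _ hgj]
  -- limits of h
  have hhlim : ∀ k, Tendsto (fun γ => h γ k) atTop
      (nhds (if k = jstar then (1:ℝ) else 0)) := by
    intro k
    by_cases hk : k = jstar
    · subst hk
      simp only [if_pos rfl, hh]
      have e : (fun γ : ℝ => Real.exp ((q k - q k - γ * (μ k - μ k)) / lam))
          = fun _ => (1:ℝ) := by funext γ; simp
      rw [e]; exact tendsto_const_nhds
    · simp only [if_neg hk, hh]
      have hc : 0 < (μ k - μ jstar) / lam :=
        div_pos (sub_pos.mpr (hmin k hk)) hlam
      have hexp : Tendsto (fun γ : ℝ => (q k - q jstar - γ * (μ k - μ jstar)) / lam)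
          atTop atBot := by
        have e : (fun γ : ℝ => (q k - q jstar - γ * (μ k - μ jstar)) / lam)
            = fun γ : ℝ => (q k - q jstar) / lam - γ * ((μ k - μ jstar) / lam) := by
          funext γ; field_simp
        rw [e]
        have h1 : Tendsto (fun γ:ℝ => γ * ((μ k - μ jstar) / lam)) atTop atTop :=
          tendsto_id.atTop_mul_const hc
        have h2 := tendsto_atBot_add_const_left atTop ((q k - q jstar) / lam)
          (tendsto_neg_atTop_atBot.comp h1)
        exact h2.congr fun γ => by simp [Function.comp]; ring
      exact Real.tendsto_exp_atBot.comp hexp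
  -- limit of the sum of h
  have hsumlim : Tendsto (fun γ => ∑ k, h γ k) atTop (nhds 1) := by
    have := tendsto_finset_sum (Finset.univ : Finset (Fin M)) (fun k _ => hhlim k)
    simpa [Finset.sum_ite_eq'] using this
  -- limits of Φ
  have hΦlim : ∀ i, Tendsto (fun γ => Φ γ i) atTop
      (nhds (if i = jstar then (1:ℝ) else 0)) := by
    intro i
    have := (hhlim i).div hsumlim one_ne_zero
    simp only [div_one] at this
    exact this.congr fun γ => (hΦeq γ i).symm
  -- the limit L
  set L : ℝ := ∑ i, |(if i = jstar then (1:ℝ) else 0) - μ i| with hL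
  have hflim : Tendsto f atTop (nhds L) := by
    apply tendsto_finset_sum
    intro i _
    exact ((hΦlim i).sub tendsto_const_nhds).abs
  have hLpos : 0 < L := by
    obtain ⟨i0, hi0⟩ := Function.ne_iff.mp hne
    have hterm : 0 < |(if i0 = jstar then (1:ℝ) else 0) - μ i0| := by
      rw [abs_pos, sub_ne_zero]
      exact fun e => hi0 e.symm
    refine lt_of_lt_of_le hterm ?_
    exact Finset.single_le_sum (f := fun i => |(if i = jstar then (1:ℝ) else 0) - μ i|)
      (fun i _ => abs_nonneg _) (Finset.mem_univ i0)
  -- μ jstar < 1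
  obtain ⟨i1, hi1⟩ := Fintype.exists_ne_of_one_lt_card hM1 jstar
  have hmuj1 : μ jstar < 1 := by
    have hsub : ({i1, jstar} : Finset (Fin M)) ⊆ Finset.univ := Finset.subset_univ _
    have hpair : μ i1 + μ jstar ≤ ∑ i, μ i := by
      rw [← Finset.sum_pair hi1]
      exact Finset.sum_le_sum_of_subset_of_nonneg hsub
        (fun i _ _ => (hpos i).le)
    have := hpos i1
    linarith [hsum ▸ hpair]
  -- Φ γ jstar < 1 always
  have hΦlt1 : ∀ γ, Φ γ jstar < 1 := by
    intro γ
    rw [hΦ]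
    simp only
    rw [div_lt_one (hD γ)]
    exact Finset.single_lt_sum hi1 (Finset.mem_univ jstar) (Finset.mem_univ i1)
      (Real.exp_pos _) (fun k _ _ => (Real.exp_pos _).le)
  -- find γ₀ with f γ₀ < L
  have hev : ∀ᶠ γ in atTop,
      (μ jstar ≤ Φ γ jstar ∧ ∀ i, i ≠ jstar → Φ γ i < 2 * μ i) := by
    have e1 : ∀ᶠ γ in atTop, μ jstar < Φ γ jstar := by
      have := hΦlim jstar
      rw [if_pos rfl] at this
      exact this.eventually (eventually_gt_nhds hmuj1)
    have e2 : ∀ᶠ γ in atTop, ∀ i, i ≠ jstar → Φ γ i < 2 * μ i := by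
      rw [eventually_all]
      intro i
      by_cases hi : i = jstar
      · filter_upwards with γ hcon; exact absurd hi hcon
      · have := hΦlim i
        rw [if_neg hi] at this
        have := this.eventually (eventually_lt_nhds (by linarith [hpos i] : (0:ℝ) < 2 * μ i))
        filter_upwards [this] with γ hγ _; exact hγ
    filter_upwards [e1, e2] with γ h1 h2
    exact ⟨h1.le, h2⟩
  obtain ⟨γ₀, hγ₀, hγ₀0⟩ := (hev.and (eventually_ge_atTop (0:ℝ))).exists
  have hfγ₀ : f γ₀ < L := by
    rw [hf, hL]
    apply Finset.sum_lt_sum_of_nonempty Finset.univ_nonempty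
    intro i _
    by_cases hi : i = jstar
    · subst hi
      rw [abs_of_nonneg (by linarith [hγ₀.1] : (0:ℝ) ≤ Φ γ₀ i - μ i),
        if_pos rfl, abs_of_nonneg (by linarith : (0:ℝ) ≤ 1 - μ i)]
      linarith [hΦlt1 γ₀]
    · rw [if_neg hi]
      have hΦpos : 0 < Φ γ₀ i := div_pos (Real.exp_pos _) (hD γ₀)
      have h2 := hγ₀.2 i hi
      rw [abs_of_nonpos (by linarith [hpos i] : (0:ℝ) - μ i ≤ 0)]
      rw [abs_lt]
      constructor <;> [linarith; linarith]
  -- attainment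
  obtain ⟨T, hT⟩ := (hflim.eventually (eventually_gt_nhds hfγ₀)).exists_forall_of_atTop
  set T' : ℝ := max T γ₀ with hT'
  have hT'0 : (0:ℝ) ≤ T' := le_trans hγ₀0 (le_max_right _ _)
  obtain ⟨γeff, hγeffmem, hγeffmin⟩ :=
    (isCompact_Icc (a := (0:ℝ)) (b := T')).exists_isMinOn
      (Set.nonempty_Icc.mpr hT'0) hcont.continuousOn
  refine ⟨hcont.continuousOn, ⟨L, hLpos, hflim⟩, γeff, hγeffmem.1, ?_⟩
  intro γ hγ
  show f γeff ≤ f γ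
  by_cases hle : γ ≤ T'
  · exact hγeffmin ⟨hγ, hle⟩
  · have h1 : f γeff ≤ f γ₀ :=
      hγeffmin ⟨hγ₀0, le_max_right _ _⟩
    have h2 : f γ₀ < f γ := hT γ (le_trans (le_max_left _ _) (le_of_lt (not_le.mp hle)))
    linarith
end

section
/- Let M ≥ 1 and let π : Fin M → ℝ be a probability vector (π_i ≥ 0, ∑_i π_i = 1). Consider the M×M matrix A with entries A_{ij} = π_i (δ_{ij} − π_j), where δ_{ij} is the Kronecker delta. Then the ℓ¹→ℓ¹ operator norm of A equals max_j 2 π_j (1 − π_j), and in particular is at most 1/2. -/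
/-- For a probability vector `p`, the `ℓ¹ → ℓ¹` operator norm of the
matrix `A i j = p i * (δ_{ij} − p j)` (the softmax Jacobian shape) equals
`max_j 2 p_j (1 − p_j)`, and in particular is at most `1/2`. The operator norm is
expressed as the least upper bound of `‖A x‖₁ / ‖x‖₁` over nonzero `x`. -/
theorem softmax_jacobian_l1_norm
    (M : ℕ) (hM : 1 ≤ M) (p : Fin M → ℝ) (hpos : ∀ i, 0 ≤ p i) (hsum : ∑ i, p i = 1) :
    IsLUB {r : ℝ | ∃ x : Fin M → ℝ, x ≠ 0 ∧
        r = (∑ i, |∑ j, (p i * ((if i = j then (1 : ℝ) else 0) - p j)) * x j|) /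
            (∑ j, |x j|)}
      (⨆ j, 2 * p j * (1 - p j))
    ∧ (⨆ j, 2 * p j * (1 - p j)) ≤ 1 / 2 := by
  haveI : NeZero M := ⟨Nat.one_le_iff_ne_zero.mp hM⟩
  have hple : ∀ i, p i ≤ 1 := by
    intro i
    calc p i ≤ ∑ j, p j := Finset.single_le_sum (fun j _ => hpos j) (Finset.mem_univ i)
    _ = 1 := hsum
  -- column sums
  have colsum : ∀ j, (∑ i, |p i * ((if i = j then (1 : ℝ) else 0) - p j)|)
      = 2 * p j * (1 - p j) := by
    intro j
    have h1 : ∀ i, |p i * ((if i = j then (1 : ℝ) else 0) - p j)|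
        = p i * p j + (if i = j then p j * (1 - p j) - p j * p j else 0) := by
      intro i
      by_cases h : i = j
      · subst h
        rw [if_pos rfl, if_pos rfl, abs_of_nonneg (by nlinarith [hpos i, hple i])]
        ring
      · simp only [if_neg h]
        rw [show p i * ((0:ℝ) - p j) = -(p i * p j) by ring, abs_neg,
          abs_of_nonneg (mul_nonneg (hpos i) (hpos j))]
        ring
    rw [Finset.sum_congr rfl (fun i _ => h1 i), Finset.sum_add_distrib,
      ← Finset.sum_mul, hsum, Finset.sum_ite_eq' Finset.univ j
        (fun _ => p j * (1 - p j) - p j * p j)]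
    simp only [Finset.mem_univ, if_pos]
    ring
  -- argmax
  obtain ⟨j0, hj0⟩ := Finite.exists_max (fun j : Fin M => 2 * p j * (1 - p j))
  have hCsup : (⨆ j, 2 * p j * (1 - p j)) = 2 * p j0 * (1 - p j0) := by
    apply le_antisymm
    · exact ciSup_le hj0
    · exact le_ciSup (f := fun j => 2 * p j * (1 - p j)) (Finite.bddAbove_range _) j0
  set C := ⨆ j, 2 * p j * (1 - p j) with hC
  rw [hC] at hCsup
  -- upper bound
  have hub : ∀ r ∈ {r : ℝ | ∃ x : Fin M → ℝ, x ≠ 0 ∧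
        r = (∑ i, |∑ j, (p i * ((if i = j then (1 : ℝ) else 0) - p j)) * x j|) /
            (∑ j, |x j|)}, r ≤ C := by
    rintro r ⟨x, hx, rfl⟩
    have hdpos : 0 < ∑ j, |x j| := by
      obtain ⟨k, hk⟩ := Function.ne_iff.mp hx
      exact Finset.sum_pos' (fun j _ => abs_nonneg _)
        ⟨k, Finset.mem_univ k, abs_pos.mpr hk⟩
    rw [div_le_iff₀ hdpos]
    calc (∑ i, |∑ j, (p i * ((if i = j then (1 : ℝ) else 0) - p j)) * x j|)
        ≤ ∑ i, ∑ j, |p i * ((if i = j then (1 : ℝ) else 0) - p j)| * |x j| := by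
          apply Finset.sum_le_sum
          intro i _
          calc |∑ j, (p i * ((if i = j then (1 : ℝ) else 0) - p j)) * x j|
              ≤ ∑ j, |(p i * ((if i = j then (1 : ℝ) else 0) - p j)) * x j| :=
                Finset.abs_sum_le_sum_abs _ _
            _ = ∑ j, |p i * ((if i = j then (1 : ℝ) else 0) - p j)| * |x j| := by
                simp [abs_mul]
      _ = ∑ j, (∑ i, |p i * ((if i = j then (1 : ℝ) else 0) - p j)|) * |x j| := by
          rw [Finset.sum_comm]
          simp [Finset.sum_mul]
      _ = ∑ j, (2 * p j * (1 - p j)) * |x j| := by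
          refine Finset.sum_congr rfl fun j _ => ?_
          rw [colsum j]
      _ ≤ ∑ j, C * |x j| := by
          apply Finset.sum_le_sum
          intro j _
          apply mul_le_mul_of_nonneg_right _ (abs_nonneg _)
          calc 2 * p j * (1 - p j) ≤ 2 * p j0 * (1 - p j0) := hj0 j
          _ = C := hCsup.symm
      _ = C * ∑ j, |x j| := by rw [Finset.mul_sum]
  -- membership
  have hmem : C ∈ {r : ℝ | ∃ x : Fin M → ℝ, x ≠ 0 ∧
        r = (∑ i, |∑ j, (p i * ((if i = j then (1 : ℝ) else 0) - p j)) * x j|) /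
            (∑ j, |x j|)} := by
    refine ⟨fun j => if j = j0 then 1 else 0, ?_, ?_⟩
    · intro h
      have := congrFun h j0
      simp at this
    · have hnum : ∀ i, (∑ j, (p i * ((if i = j then (1 : ℝ) else 0) - p j)) *
          (if j = j0 then (1:ℝ) else 0)) = p i * ((if i = j0 then (1 : ℝ) else 0) - p j0) := by
        intro i
        rw [Finset.sum_eq_single j0]
        · simp
        · intro b _ hb; simp [hb]
        · intro h; exact absurd (Finset.mem_univ j0) h
      have hden : (∑ j, |if j = j0 then (1:ℝ) else 0|) = 1 := by
        rw [Finset.sum_eq_single j0] <;> simp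
      rw [Finset.sum_congr rfl (fun i _ => congrArg abs (hnum i)), hden, colsum j0,
        div_one]
      exact hCsup
  refine ⟨⟨hub, fun b hb => hb hmem⟩, ?_⟩
  show (⨆ j, 2 * p j * (1 - p j)) ≤ 1 / 2
  rw [hCsup]
  nlinarith [sq_nonneg (p j0 - 1/2)]
end

section
/- Let M ≥ 2, q : Fin M → ℝ, γ ≥ 0 and λ > 0, and define Φ(μ)_i = exp((q_i − γ μ_i)/λ) / ∑_j exp((q_j − γ μ_j)/λ). Then for all μ, ν in the probability simplex Δ_M, ‖Φ(μ) − Φ(ν)‖₁ ≤ (γ/(2λ)) · ‖μ − ν‖₁, where ‖x‖₁ = ∑_i |x_i|. -/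
open Finset Real

private lemma quarter_bound (x : ℝ) (h0 : 0 ≤ x) (h1 : x ≤ 1) : x * (1 - x) ≤ 1 / 4 := by
  nlinarith [sq_nonneg (x - 1/2)]

/-- Core Jacobian bound: if `p` is a probability vector, then
`∑ i, p i * |c i - ∑ j, p j * c j| ≤ (1/2) * ∑ i, |c i|`. -/
private lemma core_bound {M : ℕ} (p c : Fin M → ℝ) (hp : ∀ i, 0 ≤ p i)
    (hs : ∑ i, p i = 1) :
    ∑ i, p i * |c i - ∑ j, p j * c j| ≤ (1/2) * ∑ i, |c i| := by
  have hp1 : ∀ i, p i ≤ 1 := by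
    intro i
    calc p i ≤ ∑ j, p j := Finset.single_le_sum (fun j _ => hp j) (mem_univ i)
    _ = 1 := hs
  have step1 : ∀ i, p i * |c i - ∑ j, p j * c j| ≤ ∑ j, p i * p j * |c i - c j| := by
    intro i
    have h1 : c i - ∑ j, p j * c j = ∑ j, p j * (c i - c j) := by
      simp only [mul_sub]
      rw [Finset.sum_sub_distrib, ← Finset.sum_mul, hs, one_mul]
    rw [h1]
    calc p i * |∑ j, p j * (c i - c j)| ≤ p i * ∑ j, |p j * (c i - c j)| :=
          mul_le_mul_of_nonneg_left (Finset.abs_sum_le_sum_abs _ _) (hp i)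
      _ = ∑ j, p i * p j * |c i - c j| := by
          rw [Finset.mul_sum]
          refine Finset.sum_congr rfl fun j _ => ?_
          rw [abs_mul, abs_of_nonneg (hp j)]; ring
  have step2 : ∑ i, ∑ j, p i * p j * |c i - c j|
      ≤ ∑ i, ∑ j, p i * p j * (if i = j then 0 else |c i| + |c j|) := by
    refine Finset.sum_le_sum fun i _ => Finset.sum_le_sum fun j _ => ?_
    by_cases h : i = j
    · simp [h]
    · simp only [if_neg h]
      exact mul_le_mul_of_nonneg_left (abs_sub (c i) (c j))
        (mul_nonneg (hp i) (hp j))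
  have hA : ∑ i, ∑ j, p i * p j * (|c i| + |c j|) = 2 * ∑ i, p i * |c i| := by
    have h1 : ∀ i, ∑ j, p i * p j * (|c i| + |c j|)
        = p i * |c i| + p i * ∑ j, p j * |c j| := by
      intro i
      have h2 : ∀ j, p i * p j * (|c i| + |c j|)
          = (p i * |c i|) * p j + p i * (p j * |c j|) := fun j => by ring
      rw [Finset.sum_congr rfl fun j _ => h2 j, Finset.sum_add_distrib,
        ← Finset.mul_sum, ← Finset.mul_sum, hs, mul_one]
    rw [Finset.sum_congr rfl fun i _ => h1 i, Finset.sum_add_distrib, ← Finset.sum_mul, hs,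
      one_mul]
    ring
  have step3 : ∑ i, ∑ j, p i * p j * (if i = j then 0 else |c i| + |c j|)
      = 2 * ∑ i, p i * (1 - p i) * |c i| := by
    have hinner : ∀ i, ∑ j, p i * p j * (if i = j then 0 else |c i| + |c j|)
        = (∑ j, p i * p j * (|c i| + |c j|)) - p i * p i * (2 * |c i|) := by
      intro i
      have hterm : ∀ j, p i * p j * (if i = j then 0 else |c i| + |c j|)
          = p i * p j * (|c i| + |c j|)
            - (if j = i then p i * p i * (2 * |c i|) else 0) := by
        intro j
        by_cases h : i = j
        · subst h; simp; ring
        · have h' : ¬ (j = i) := fun hh => h hh.symm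
          simp [h, h']
      rw [Finset.sum_congr rfl fun j _ => hterm j, Finset.sum_sub_distrib,
        Finset.sum_ite_eq' univ i (fun _ => p i * p i * (2 * |c i|))]
      simp
    have hB : ∑ i, p i * (1 - p i) * |c i|
        = (∑ i, p i * |c i|) - ∑ i, p i * p i * |c i| := by
      rw [← Finset.sum_sub_distrib]
      exact Finset.sum_congr rfl fun i _ => by ring
    have hC : ∑ i, p i * p i * (2 * |c i|) = 2 * ∑ i, p i * p i * |c i| := by
      rw [Finset.mul_sum]
      exact Finset.sum_congr rfl fun i _ => by ring
    rw [Finset.sum_congr rfl fun i _ => hinner i, Finset.sum_sub_distrib, hA, hB, hC]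
    ring
  have step4 : 2 * ∑ i, p i * (1 - p i) * |c i| ≤ (1/2) * ∑ i, |c i| := by
    have h : ∑ i, p i * (1 - p i) * |c i| ≤ ∑ i, (1/4) * |c i| :=
      Finset.sum_le_sum fun i _ =>
        mul_le_mul_of_nonneg_right (quarter_bound (p i) (hp i) (hp1 i)) (abs_nonneg _)
    calc 2 * ∑ i, p i * (1 - p i) * |c i| ≤ 2 * ∑ i, (1/4) * |c i| := by linarith
      _ = (1/2) * ∑ i, |c i| := by rw [← Finset.mul_sum]; ring
  calc ∑ i, p i * |c i - ∑ j, p j * c j| ≤ ∑ i, ∑ j, p i * p j * |c i - c j| :=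
        Finset.sum_le_sum fun i _ => step1 i
    _ ≤ _ := step2
    _ = _ := step3
    _ ≤ _ := step4

/-- Softmax is `1/2`-Lipschitz from `ℓ¹` to `ℓ¹`. -/
private lemma softmax_l1_lipschitz {M : ℕ} (a b : Fin M → ℝ) :
    ∑ i, |Real.exp (a i) / (∑ j, Real.exp (a j)) -
          Real.exp (b i) / (∑ j, Real.exp (b j))|
      ≤ (1/2) * ∑ i, |a i - b i| := by
  rcases Nat.eq_zero_or_pos M with hM0 | hM0
  · subst hM0; simp
  have hne : (Finset.univ : Finset (Fin M)).Nonempty := by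
    simpa [Finset.univ_nonempty_iff] using Fin.pos_iff_nonempty.mp hM0
  set c : Fin M → ℝ := fun i => b i - a i with hc
  set f : ℝ → Fin M → ℝ :=
    fun t i => Real.exp (a i + t * c i) / ∑ j, Real.exp (a j + t * c j) with hf
  set f' : ℝ → Fin M → ℝ :=
    fun t i => f t i * (c i - ∑ j, f t j * c j) with hf'
  have hSpos : ∀ t : ℝ, 0 < ∑ j, Real.exp (a j + t * c j) := fun t =>
    Finset.sum_pos (fun j _ => Real.exp_pos _) hne
  have hderiv : ∀ t i, HasDerivAt (fun s => f s i) (f' t i) t := by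
    intro t i
    have hnum : ∀ j, HasDerivAt (fun s : ℝ => Real.exp (a j + s * c j))
        (Real.exp (a j + t * c j) * c j) t := by
      intro j
      have h1 : HasDerivAt (fun s : ℝ => a j + s * c j) (c j) t := by
        simpa using ((hasDerivAt_id t).mul_const (c j)).const_add (a j)
      simpa using h1.exp
    have hden : HasDerivAt (fun s : ℝ => ∑ j, Real.exp (a j + s * c j))
        (∑ j, Real.exp (a j + t * c j) * c j) t :=
      HasDerivAt.fun_sum fun j _ => hnum j
    have hdiv := (hnum i).div hden (ne_of_gt (hSpos t))
    have heq : f' t i = (Real.exp (a i + t * c i) * c i * (∑ j, Real.exp (a j + t * c j))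
        - Real.exp (a i + t * c i) * ∑ j, Real.exp (a j + t * c j) * c j)
        / (∑ j, Real.exp (a j + t * c j)) ^ 2 := by
      have hS := (hSpos t).ne'
      simp only [hf', hf]
      have hsum : ∑ j, (Real.exp (a j + t * c j) / (∑ k, Real.exp (a k + t * c k))) * c j
          = (∑ j, Real.exp (a j + t * c j) * c j) / (∑ k, Real.exp (a k + t * c k)) := by
        rw [Finset.sum_div]
        exact Finset.sum_congr rfl fun j _ => by rw [div_mul_eq_mul_div]
      rw [hsum]
      field_simp
    rw [heq]
    exact hdiv
  set e := PiLp.continuousLinearEquiv 1 ℝ (fun _ : Fin M => ℝ) with he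
  set F : ℝ → PiLp 1 (fun _ : Fin M => ℝ) := fun t => e.symm (f t) with hF
  have hFderiv : ∀ t, HasDerivAt F (e.symm (f' t)) t := by
    intro t
    exact (e.symm.toContinuousLinearMap.hasFDerivAt).comp_hasDerivAt t
      (hasDerivAt_pi.2 (hderiv t))
  have hnorm : ∀ (v : Fin M → ℝ), ‖e.symm v‖ = ∑ i, |v i| := by
    intro v
    rw [PiLp.norm_eq_sum (p := 1) (by norm_num)]
    simp only [ENNReal.toReal_one, Real.rpow_one, Real.norm_eq_abs, one_div, inv_one]
    rfl
  have hbound : ∀ t : ℝ, ‖e.symm (f' t)‖ ≤ (1/2) * ∑ i, |c i| := by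
    intro t
    rw [hnorm]
    have hfpos : ∀ i, 0 ≤ f t i := fun i =>
      div_nonneg (Real.exp_nonneg _) (hSpos t).le
    have hfsum : ∑ i, f t i = 1 := by
      simp only [hf]
      rw [← Finset.sum_div, div_self (hSpos t).ne']
    have hcb := core_bound (f t) c hfpos hfsum
    calc ∑ i, |f' t i| = ∑ i, f t i * |c i - ∑ j, f t j * c j| := by
          refine Finset.sum_congr rfl fun i _ => ?_
          rw [hf', abs_mul, abs_of_nonneg (hfpos i)]
      _ ≤ (1/2) * ∑ i, |c i| := hcb
  have key := norm_image_sub_le_of_norm_deriv_le_segment'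
    (f := F) (f' := fun t => e.symm (f' t)) (a := 0) (b := 1) (C := (1/2) * ∑ i, |c i|)
    (fun x _ => (hFderiv x).hasDerivWithinAt)
    (fun x _ => hbound x) 1 (by norm_num)
  have hF1 : ‖F 1 - F 0‖ = ∑ i, |f 1 i - f 0 i| := by
    have hsub : F 1 - F 0 = e.symm (fun i => f 1 i - f 0 i) := by
      apply e.injective
      simp [hF]
      rfl
    rw [hsub, hnorm]
  rw [hF1] at key
  have hf0 : ∀ i, f 0 i = Real.exp (a i) / ∑ j, Real.exp (a j) := by
    intro i; simp [hf]
  have hf1 : ∀ i, f 1 i = Real.exp (b i) / ∑ j, Real.exp (b j) := by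
    intro i; simp [hf, hc]
  have hca : ∀ i, |c i| = |a i - b i| := by
    intro i; rw [hc, abs_sub_comm]
  calc ∑ i, |Real.exp (a i) / (∑ j, Real.exp (a j)) -
          Real.exp (b i) / (∑ j, Real.exp (b j))|
      = ∑ i, |f 1 i - f 0 i| := by
        refine Finset.sum_congr rfl fun i _ => ?_
        rw [hf0, hf1, abs_sub_comm]
    _ ≤ (1/2) * ∑ i, |c i| := by simpa using key
    _ = (1/2) * ∑ i, |a i - b i| := by
        congr 1; exact Finset.sum_congr rfl fun i _ => hca i

/-- Best-response contraction: the softmax best-response map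
`Φ(μ)_i = exp((q_i − γ μ_i)/λ) / ∑_j exp((q_j − γ μ_j)/λ)` satisfies
`‖Φ(μ) − Φ(ν)‖₁ ≤ (γ/(2λ)) ‖μ − ν‖₁` on the probability simplex. -/
theorem best_response_contraction
    (M : ℕ) (hM : 2 ≤ M) (q : Fin M → ℝ) (γ : ℝ) (hγ : 0 ≤ γ)
    (lam : ℝ) (hlam : 0 < lam)
    (μ ν : Fin M → ℝ)
    (hμ : (∀ i, 0 ≤ μ i) ∧ ∑ i, μ i = 1)
    (hν : (∀ i, 0 ≤ ν i) ∧ ∑ i, ν i = 1) :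
    (∑ i, |Real.exp ((q i - γ * μ i) / lam) / (∑ j, Real.exp ((q j - γ * μ j) / lam)) -
           Real.exp ((q i - γ * ν i) / lam) / (∑ j, Real.exp ((q j - γ * ν j) / lam))|)
    ≤ (γ / (2 * lam)) * ∑ i, |μ i - ν i| := by
  have key := softmax_l1_lipschitz (fun i => (q i - γ * μ i) / lam)
    (fun i => (q i - γ * ν i) / lam)
  have habs : ∀ i, |(q i - γ * μ i) / lam - (q i - γ * ν i) / lam|
      = (γ / lam) * |μ i - ν i| := by
    intro i
    have h1 : (q i - γ * μ i) / lam - (q i - γ * ν i) / lam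
        = (γ / lam) * (ν i - μ i) := by field_simp; ring
    rw [h1, abs_mul, abs_of_nonneg (div_nonneg hγ hlam.le), abs_sub_comm]
  calc (∑ i, |Real.exp ((q i - γ * μ i) / lam) / (∑ j, Real.exp ((q j - γ * μ j) / lam)) -
           Real.exp ((q i - γ * ν i) / lam) / (∑ j, Real.exp ((q j - γ * ν j) / lam))|)
      ≤ (1/2) * ∑ i, |(q i - γ * μ i) / lam - (q i - γ * ν i) / lam| := key
    _ = (γ / (2 * lam)) * ∑ i, |μ i - ν i| := by
        rw [Finset.sum_congr rfl fun i _ => habs i, ← Finset.mul_sum]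
        ring
end

section
/- Let M ≥ 2, 1 ≤ K ≤ M, q : Fin M → ℝ, γ ≥ 0 and λ > 0 with ρ := γ/(2λ) < 1. Let Φ(μ)_i = exp((q_i − γ μ_i)/λ) / ∑_j exp((q_j − γ μ_j)/λ), and let Φ^(K) be any map from the probability simplex Δ_M to itself satisfying ‖Φ(μ) − Φ^(K)(μ)‖₁ ≤ 2(1 − K/M) for all μ ∈ Δ_M. Let μ* be the unique fixed point of Φ in Δ_M and μ^(K) any fixed point of Φ^(K) in Δ_M. Then ‖μ* − μ^(K)‖₁ ≤ 2(1 − K/M) / (1 − ρ). -/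
open Finset

lemma mad_le_half_span {M : ℕ} (w c : Fin M → ℝ) (hw : ∀ i, 0 ≤ w i)
    (hw1 : ∑ i, w i = 1) (mn Mx : ℝ) (hmn : ∀ i, mn ≤ c i) (hMx : ∀ i, c i ≤ Mx) :
    ∑ i, w i * |c i - ∑ j, w j * c j| ≤ (Mx - mn) / 2 := by
  set m := ∑ j, w j * c j with hm
  have hmle : m ≤ Mx := by
    calc m ≤ ∑ j, w j * Mx := Finset.sum_le_sum fun j _ =>
            mul_le_mul_of_nonneg_left (hMx j) (hw j)
    _ = Mx := by rw [← Finset.sum_mul, hw1, one_mul]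
  have hmge : mn ≤ m := by
    calc mn = ∑ j, w j * mn := by rw [← Finset.sum_mul, hw1, one_mul]
    _ ≤ m := Finset.sum_le_sum fun j _ => mul_le_mul_of_nonneg_left (hmn j) (hw j)
  set F := univ.filter (fun i => m < c i) with hF
  set S := ∑ i ∈ F, w i * (c i - m) with hS
  set W := ∑ i ∈ F, w i with hW
  set A := Mx - m with hA
  set B := m - mn with hB
  have hA0 : 0 ≤ A := by simp only [hA]; linarith
  have hB0 : 0 ≤ B := by simp only [hB]; linarith
  have hS0 : 0 ≤ S := Finset.sum_nonneg fun i hi => by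
    have := (Finset.mem_filter.mp hi).2
    have := hw i
    nlinarith
  have hW0 : 0 ≤ W := Finset.sum_nonneg fun i _ => hw i
  have hW1 : W ≤ 1 := by
    rw [← hw1]
    exact Finset.sum_le_sum_of_subset_of_nonneg (Finset.filter_subset _ _)
      (fun i _ _ => hw i)
  have hzero : ∑ i, w i * (c i - m) = 0 := by
    simp only [mul_sub]
    rw [Finset.sum_sub_distrib, ← Finset.sum_mul, hw1, one_mul, ← hm, sub_self]
  have hsplit := Finset.sum_filter_add_sum_filter_not univ (fun i => m < c i)
      (fun i => w i * (c i - m))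
  rw [hzero] at hsplit
  have hSA : S ≤ A * W := by
    rw [hW, Finset.mul_sum, hS]
    refine Finset.sum_le_sum fun i hi => ?_
    have hc := hMx i
    have := hw i
    nlinarith
  have hWsplit := Finset.sum_filter_add_sum_filter_not univ (fun i => m < c i) w
  rw [hw1] at hWsplit
  have hSB : S ≤ B * (1 - W) := by
    have hSeq : S = ∑ i ∈ univ.filter (fun i => ¬ m < c i), w i * (m - c i) := by
      have h1 : ∑ i ∈ univ.filter (fun i => ¬ m < c i), w i * (m - c i)
          = - ∑ i ∈ univ.filter (fun i => ¬ m < c i), w i * (c i - m) := by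
        rw [← Finset.sum_neg_distrib]
        exact Finset.sum_congr rfl fun i _ => by ring
      rw [h1, hS]; linarith [hsplit]
    have hWc : (1 : ℝ) - W = ∑ i ∈ univ.filter (fun i => ¬ m < c i), w i := by
      rw [hW]; linarith [hWsplit]
    rw [hSeq, hWc, Finset.mul_sum]
    refine Finset.sum_le_sum fun i hi => ?_
    have hc := hmn i
    have := hw i
    nlinarith
  have hMAD : ∑ i, w i * |c i - m| = 2 * S := by
    have habs : ∀ i, w i * |c i - m| = 2 * (w i * max (c i - m) 0) - w i * (c i - m) := by
      intro i
      rcases le_total (c i - m) 0 with h | h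
      · rw [abs_of_nonpos h, max_eq_right h]; ring
      · rw [abs_of_nonneg h, max_eq_left h]; ring
    rw [Finset.sum_congr rfl fun i _ => habs i, Finset.sum_sub_distrib, hzero,
      ← Finset.mul_sum]
    have hmax : ∑ i, w i * max (c i - m) 0 = S := by
      rw [hS, ← Finset.sum_filter_add_sum_filter_not univ (fun i => m < c i)
        (fun i => w i * max (c i - m) 0)]
      have h2 : ∑ i ∈ univ.filter (fun i => ¬ m < c i), w i * max (c i - m) 0 = 0 := by
        refine Finset.sum_eq_zero fun i hi => ?_
        have := (Finset.mem_filter.mp hi).2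
        rw [max_eq_right (by linarith [not_lt.mp this])]
        ring
      rw [h2, add_zero, ← hF]
      exact Finset.sum_congr rfl fun i hi => by
        rw [max_eq_left (le_of_lt (by linarith [(Finset.mem_filter.mp (hF ▸ hi)).2]))]
    rw [hmax]; ring
  rw [hMAD]
  have hfin : Mx - mn = A + B := by rw [hA, hB]; ring
  rw [hfin]
  nlinarith [mul_le_mul_of_nonneg_left hSA hB0, mul_le_mul_of_nonneg_left hSB hA0,
    sq_nonneg (A - B), mul_nonneg hA0 (sub_nonneg.mpr hW1), mul_nonneg hB0 hW0]


lemma softmax_contract {M : ℕ} (hM : 0 < M) (a b : Fin M → ℝ) (C : ℝ)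
    (hspan : ∀ i j, (a i - b i) - (a j - b j) ≤ 2 * C) :
    ∑ i, |Real.exp (a i) / (∑ j, Real.exp (a j))
      - Real.exp (b i) / (∑ j, Real.exp (b j))| ≤ C := by
  haveI : NeZero M := ⟨hM.ne'⟩
  set c : Fin M → ℝ := fun i => a i - b i with hc
  set S : ℝ → ℝ := fun t => ∑ j, Real.exp (b j + t * c j) with hSdef
  have hSpos : ∀ t, 0 < S t := fun t =>
    Finset.sum_pos (fun j _ => Real.exp_pos _) Finset.univ_nonempty
  set f : ℝ → Fin M → ℝ := fun t i => Real.exp (b i + t * c i) / S t with hfdef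
  set f' : ℝ → Fin M → ℝ := fun t i => f t i * (c i - ∑ j, f t j * c j) with hf'def
  -- derivative of each component
  have hderiv : ∀ t i, HasDerivAt (fun s => f s i) (f' t i) t := by
    intro t i
    have hnum : ∀ j, HasDerivAt (fun s => Real.exp (b j + s * c j))
        (Real.exp (b j + t * c j) * c j) t := by
      intro j
      have h1 : HasDerivAt (fun s : ℝ => b j + s * c j) (c j) t := by
        simpa using ((hasDerivAt_mul_const (c j)).const_add (b j))
      simpa using h1.exp
    have hden : HasDerivAt S (∑ j, Real.exp (b j + t * c j) * c j) t := by
      rw [hSdef]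
      exact HasDerivAt.fun_sum fun j _ => hnum j
    have hdiv := (hnum i).div hden (hSpos t).ne'
    refine HasDerivAt.congr_deriv hdiv (Eq.symm ?_)
    have hsum : ∑ j, f t j * c j = (∑ j, Real.exp (b j + t * c j) * c j) / S t := by
      rw [Finset.sum_div]
      exact Finset.sum_congr rfl fun j _ => by rw [hfdef]; ring
    simp only [hf'def]
    rw [hsum]
    simp only [hfdef]
    have hS0 := (hSpos t).ne'
    field_simp
  -- move to PiLp 1
  set e := (PiLp.continuousLinearEquiv 1 ℝ (fun _ : Fin M => ℝ)).symm with he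
  set φ : ℝ → PiLp 1 (fun _ : Fin M => ℝ) := fun t => e (f t) with hφ
  have hφderiv : ∀ t, HasDerivAt φ (e (f' t)) t := by
    intro t
    have hf : HasDerivAt f (f' t) t := hasDerivAt_pi.mpr (fun i => hderiv t i)
    exact (e.toContinuousLinearMap.hasFDerivAt).comp_hasDerivAt t hf
  have hfnn : ∀ t i, 0 ≤ f t i := fun t i => div_nonneg (Real.exp_pos _).le (hSpos t).le
  have hfsum : ∀ t, ∑ i, f t i = 1 := by
    intro t
    rw [hfdef]
    simp only
    rw [← Finset.sum_div]
    exact div_self (hSpos t).ne'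
  obtain ⟨i0, -, hi0⟩ := Finset.exists_max_image univ c Finset.univ_nonempty
  obtain ⟨j0, -, hj0⟩ := Finset.exists_min_image univ c Finset.univ_nonempty
  have hC0 : 0 ≤ C := by have := hspan i0 i0; linarith
  have hbound : ∀ t, ‖e (f' t)‖ ≤ C := by
    intro t
    have hnorm : ‖e (f' t)‖ = ∑ i, |f' t i| := by
      rw [PiLp.norm_eq_sum (p := 1) (by norm_num)]
      simp [he, PiLp.continuousLinearEquiv_symm_apply]
    rw [hnorm]
    have habs : ∀ i, |f' t i| = f t i * |c i - ∑ j, f t j * c j| := by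
      intro i
      rw [hf'def]
      simp only
      rw [abs_mul, abs_of_nonneg (hfnn t i)]
    rw [Finset.sum_congr rfl fun i _ => habs i]
    have hmad := mad_le_half_span (f t) c (hfnn t) (hfsum t) (c j0) (c i0)
      (fun i => hj0 i (Finset.mem_univ i)) (fun i => hi0 i (Finset.mem_univ i))
    have hsp : c i0 - c j0 ≤ 2 * C := hspan i0 j0
    refine hmad.trans ?_
    clear_value c S f f'
    linarith
  have hmvt := convex_univ.norm_image_sub_le_of_norm_hasDerivWithin_le
    (f := φ) (f' := fun t => e (f' t))
    (fun x _ => (hφderiv x).hasDerivWithinAt) (fun x _ => hbound x)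
    (Set.mem_univ (0 : ℝ)) (Set.mem_univ (1 : ℝ))
  have h10 : ‖(1 : ℝ) - 0‖ = 1 := by norm_num
  rw [h10, mul_one] at hmvt
  have hnormeq : ‖φ 1 - φ 0‖ = ∑ i, |f 1 i - f 0 i| := by
    rw [PiLp.norm_eq_sum (p := 1) (by norm_num)]
    norm_num
    rfl
  rw [hnormeq] at hmvt
  have hfa : ∀ i, f 1 i = Real.exp (a i) / (∑ j, Real.exp (a j)) := by
    intro i
    rw [hfdef]
    simp only [hSdef, hc]
    norm_num
  have hfb : ∀ i, f 0 i = Real.exp (b i) / (∑ j, Real.exp (b j)) := by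
    intro i
    rw [hfdef]
    simp only [hSdef, hc]
    norm_num
  calc ∑ i, |Real.exp (a i) / (∑ j, Real.exp (a j))
      - Real.exp (b i) / (∑ j, Real.exp (b j))|
      = ∑ i, |f 1 i - f 0 i| := by
        exact Finset.sum_congr rfl fun i _ => by rw [hfa i, hfb i]
    _ ≤ C := hmvt

lemma pair_sub_le_sum_abs {M : ℕ} (x : Fin M → ℝ) (i j : Fin M) :
    x i - x j ≤ ∑ k, |x k| := by
  rcases eq_or_ne i j with rfl | hij
  · simp only [sub_self]
    exact Finset.sum_nonneg fun k _ => abs_nonneg _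
  · have h1 : x i - x j ≤ |x i| + |x j| := by
      have h3 := le_abs_self (x i)
      have h4 := neg_abs_le (x j)
      linarith
    have h2 : |x i| + |x j| = ∑ k ∈ ({i, j} : Finset (Fin M)), |x k| :=
      (Finset.sum_pair (f := fun k => |x k|) hij).symm
    have h5 : ∑ k ∈ ({i, j} : Finset (Fin M)), |x k| ≤ ∑ k, |x k| :=
      Finset.sum_le_sum_of_subset_of_nonneg
        (Finset.subset_univ _) (fun k _ _ => abs_nonneg _)
    linarith

/-- Top-K approximation error: if `ρ = γ/(2λ) < 1`, `μ*` is the fixed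
point of the softmax best-response map `Φ` on the simplex, and `μ^(K)` is any fixed
point of a map `Φ^(K)` from the simplex to itself that is uniformly within
`2(1 − K/M)` of `Φ` in `L¹`, then `‖μ* − μ^(K)‖₁ ≤ 2(1 − K/M)/(1 − ρ)`. -/
theorem topK_approximation_error
    (M K : ℕ) (hM : 2 ≤ M) (hK1 : 1 ≤ K) (hKM : K ≤ M)
    (q : Fin M → ℝ) (γ : ℝ) (hγ : 0 ≤ γ) (lam : ℝ) (hlam : 0 < lam)
    (hρ : γ / (2 * lam) < 1)
    (ΦK : (Fin M → ℝ) → (Fin M → ℝ))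
    (hΦK_maps : ∀ μ : Fin M → ℝ, (∀ i, 0 ≤ μ i) → ∑ i, μ i = 1 →
      (∀ i, 0 ≤ ΦK μ i) ∧ ∑ i, ΦK μ i = 1)
    (hclose : ∀ μ : Fin M → ℝ, (∀ i, 0 ≤ μ i) → ∑ i, μ i = 1 →
      (∑ i, |Real.exp ((q i - γ * μ i) / lam) /
          (∑ j, Real.exp ((q j - γ * μ j) / lam)) - ΦK μ i|) ≤ 2 * (1 - (K : ℝ) / M))
    (μstar : Fin M → ℝ) (hμstar : (∀ i, 0 ≤ μstar i) ∧ ∑ i, μstar i = 1)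
    (hfix : ∀ i, μstar i = Real.exp ((q i - γ * μstar i) / lam) /
        (∑ j, Real.exp ((q j - γ * μstar j) / lam)))
    (μK : Fin M → ℝ) (hμK : (∀ i, 0 ≤ μK i) ∧ ∑ i, μK i = 1)
    (hfixK : ΦK μK = μK) :
    (∑ i, |μstar i - μK i|) ≤ 2 * (1 - (K : ℝ) / M) / (1 - γ / (2 * lam)) := by
  have hM0 : 0 < M := by omega
  set a : Fin M → ℝ := fun i => (q i - γ * μstar i) / lam with ha
  set b : Fin M → ℝ := fun i => (q i - γ * μK i) / lam with hb
  set d : ℝ := ∑ i, |μstar i - μK i| with hd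
  set ρ : ℝ := γ / (2 * lam) with hρdef
  have hρ0 : 0 ≤ ρ := div_nonneg hγ (by linarith)
  have hspan : ∀ i j, (a i - b i) - (a j - b j) ≤ 2 * (ρ * d) := by
    intro i j
    have h1 : (a i - b i) - (a j - b j)
        = (γ / lam) * ((μK i - μstar i) - (μK j - μstar j)) := by
      simp only [ha, hb]
      field_simp
      ring
    have h2 : (μK i - μstar i) - (μK j - μstar j)
        ≤ ∑ k, |μK k - μstar k| := pair_sub_le_sum_abs (fun k => μK k - μstar k) i j
    have h3 : ∑ k, |μK k - μstar k| = d := by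
      rw [hd]
      exact Finset.sum_congr rfl fun k _ => abs_sub_comm _ _
    have h4 : 0 ≤ γ / lam := div_nonneg hγ hlam.le
    have h5 : (γ / lam) * ((μK i - μstar i) - (μK j - μstar j))
        ≤ (γ / lam) * d := mul_le_mul_of_nonneg_left (h3 ▸ h2) h4
    have h6 : (γ / lam) * d = 2 * (ρ * d) := by
      rw [hρdef]
      field_simp
    rw [h1]
    linarith
  have hcontr := softmax_contract hM0 a b (ρ * d) hspan
  have hcloseK := hclose μK hμK.1 hμK.2
  have htri : d ≤ (∑ i, |Real.exp (a i) / (∑ j, Real.exp (a j))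
        - Real.exp (b i) / (∑ j, Real.exp (b j))|)
      + ∑ i, |Real.exp (b i) / (∑ j, Real.exp (b j)) - ΦK μK i| := by
    rw [hd, ← Finset.sum_add_distrib]
    refine Finset.sum_le_sum fun i _ => ?_
    have h1 : μstar i = Real.exp (a i) / (∑ j, Real.exp (a j)) := hfix i
    have h2 : μK i = ΦK μK i := (congrFun hfixK i).symm
    rw [h1, h2]
    exact abs_sub_le _ _ _
  have hKey : d ≤ ρ * d + 2 * (1 - (K : ℝ) / M) := by
    have := htri.trans (add_le_add hcontr hcloseK)
    linarith
  have h1ρ : 0 < 1 - ρ := by linarith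
  rw [le_div_iff₀ h1ρ]
  nlinarith [hKey]
end

section
/- Let M ≥ 2, K ≥ 1, let w : Fin K → ℝ be strictly positive weights with ∑_k w_k = 1, let q^(k) : Fin M → ℝ be quality vectors for each type k, let γ ≥ 0 and λ > 0. Define the multi-type Rosenthal potential on the K-fold product of probability simplices Δ_M^K by Ψ(μ^(1), …, μ^(K)) = (γ/2) ∑_i f_i² − ∑_k w_k ∑_i q_i^(k) μ_i^(k) + λ ∑_k w_k ∑_i μ_i^(k) log μ_i^(k), where f_i = ∑_k w_k μ_i^(k) and 0·log 0 = 0. Then Ψ is strictly convex on Δ_M^K and attains its minimum at a unique point, and this minimizer lies in the interior of Δ_M^K (all entries of all types strictly positive). -/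
private lemma sum_two_support' {M : ℕ} (i j : Fin M) (hij : i ≠ j) (d : Fin M → ℝ)
    (h : ∀ x, x ≠ i → x ≠ j → d x = 0) : ∑ x, d x = d i + d j := by
  rw [← Finset.sum_subset (Finset.subset_univ ({i, j} : Finset (Fin M)))]
  · rw [Finset.sum_pair hij]
  · intro x _ hx
    simp only [Finset.mem_insert, Finset.mem_singleton, not_or] at hx
    exact h x hx.1 hx.2

private lemma sum_one_support' {K : ℕ} (k0 : Fin K) (d : Fin K → ℝ)
    (h : ∀ k, k ≠ k0 → d k = 0) : ∑ k, d k = d k0 :=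
  Finset.sum_eq_single_of_mem k0 (Finset.mem_univ _) (fun b _ hb => h b hb)

set_option maxHeartbeats 1000000 in
private lemma min_interior (M K : ℕ) (hM : 2 ≤ M)
    (w : Fin K → ℝ) (hw : ∀ k, 0 < w k) (hwsum : ∑ k, w k = 1)
    (q : Fin K → Fin M → ℝ) (γ : ℝ) (hγ : 0 ≤ γ) (lam : ℝ) (hlam : 0 < lam)
    (μ : Fin K → Fin M → ℝ) (hμ : ∀ k, (∀ i, 0 ≤ μ k i) ∧ ∑ i, μ k i = 1)
    (hmin : ∀ ν : Fin K → Fin M → ℝ, (∀ k, (∀ i, 0 ≤ ν k i) ∧ ∑ i, ν k i = 1) →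
      ((γ / 2) * ∑ i, (∑ k, w k * μ k i) ^ 2
        - ∑ k, w k * ∑ i, q k i * μ k i
        + lam * ∑ k, w k * ∑ i, μ k i * Real.log (μ k i)) ≤
      ((γ / 2) * ∑ i, (∑ k, w k * ν k i) ^ 2
        - ∑ k, w k * ∑ i, q k i * ν k i
        + lam * ∑ k, w k * ∑ i, ν k i * Real.log (ν k i))) :
    ∀ k i, 0 < μ k i := by
  intro k0 i0
  by_contra hcon
  have h0 : μ k0 i0 = 0 := le_antisymm (not_lt.1 hcon) ((hμ k0).1 i0)
  obtain ⟨j0, ha⟩ : ∃ j, 0 < μ k0 j := by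
    by_contra h; push_neg at h
    have : ∑ i, μ k0 i = 0 := Finset.sum_eq_zero fun i _ =>
      le_antisymm (h i) ((hμ k0).1 i)
    rw [(hμ k0).2] at this; norm_num at this
  have hij : i0 ≠ j0 := by
    intro h; rw [h] at h0; rw [h0] at ha; exact lt_irrefl 0 ha
  set a : ℝ := μ k0 j0 with haa
  set c : ℝ := w k0 with hc
  have hc0 : 0 < c := hw k0
  have hc1 : c ≤ 1 := by
    rw [hc, ← hwsum]
    exact Finset.single_le_sum (f := w) (fun k _ => (hw k).le) (Finset.mem_univ k0)
  have ha1 : a ≤ 1 := by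
    rw [haa, ← (hμ k0).2]
    exact Finset.single_le_sum (f := μ k0) (fun j _ => (hμ k0).1 j) (Finset.mem_univ j0)
  set C : ℝ := 2*γ + c*(|q k0 i0| + |q k0 j0|) + lam * c * |Real.log a| with hC
  have hC0 : 0 ≤ C := by
    have h1 : 0 ≤ c*(|q k0 i0| + |q k0 j0|) := by positivity
    have h2 : 0 ≤ lam * c * |Real.log a| := by positivity
    rw [hC]; linarith
  set t : ℝ := min (min (a/2) 1) (Real.exp (-(C + 1) / (lam * c))) with htdef
  have ht0 : 0 < t := lt_min (lt_min (by linarith) one_pos) (Real.exp_pos _)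
  have hta : t ≤ a/2 := le_trans (min_le_left _ _) (min_le_left _ _)
  have ht1 : t ≤ 1 := le_trans (min_le_left _ _) (min_le_right _ _)
  have hlogt : lam * c * Real.log t ≤ -(C + 1) := by
    have h1 : Real.log t ≤ -(C + 1) / (lam * c) := by
      have := Real.log_le_log ht0 (min_le_right (min (a/2) 1) (Real.exp (-(C + 1) / (lam * c))))
      rwa [Real.log_exp] at this
    have hlc : 0 < lam * c := mul_pos hlam hc0
    calc lam * c * Real.log t ≤ lam * c * (-(C + 1) / (lam * c)) :=
          mul_le_mul_of_nonneg_left h1 hlc.le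
      _ = -(C + 1) := by field_simp
  -- perturbed point
  set ν : Fin K → Fin M → ℝ := fun k i =>
    if k = k0 then (if i = i0 then t else if i = j0 then a - t else μ k i) else μ k i
    with hν
  have hν_other : ∀ k, k ≠ k0 → ν k = μ k := by
    intro k hk; funext i; simp [hν, hk]
  have hν_i0 : ν k0 i0 = t := by simp [hν]
  have hν_j0 : ν k0 j0 = a - t := by simp [hν, (Ne.symm hij)]
  have hν_row : ∀ i, i ≠ i0 → i ≠ j0 → ν k0 i = μ k0 i := by
    intro i h1 h2; simp [hν, h1, h2]
  -- ν is in the simplex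
  have hrow0 : (∀ i, 0 ≤ ν k0 i) ∧ ∑ i, ν k0 i = 1 := by
    constructor
    · intro i
      by_cases h1 : i = i0
      · rw [h1, hν_i0]; exact ht0.le
      · by_cases h2 : i = j0
        · rw [h2, hν_j0]; linarith
        · rw [hν_row i h1 h2]; exact (hμ k0).1 i
    · have hdiff : ∑ i, (ν k0 i - μ k0 i) = (ν k0 i0 - μ k0 i0) + (ν k0 j0 - μ k0 j0) :=
        sum_two_support' i0 j0 hij _ (fun x hx1 hx2 => by rw [hν_row x hx1 hx2]; ring)
      have heq : ∑ i, ν k0 i = ∑ i, μ k0 i + ∑ i, (ν k0 i - μ k0 i) := by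
        rw [← Finset.sum_add_distrib]; exact Finset.sum_congr rfl fun i _ => by ring
      rw [heq, (hμ k0).2, hdiff, hν_i0, hν_j0, h0, ← haa]; ring
  have hνS : ∀ k, (∀ i, 0 ≤ ν k i) ∧ ∑ i, ν k i = 1 := by
    intro k
    by_cases hk : k = k0
    · rw [hk]; exact hrow0
    · rw [hν_other k hk]; exact hμ k
  -- load differences per column
  have hFν : ∀ i, ∑ k, w k * ν k i
      = (∑ k, w k * μ k i) + (if i = i0 then c*t else if i = j0 then -(c*t) else 0) := by
    intro i
    have hd : ∑ k, (w k * ν k i - w k * μ k i) = w k0 * ν k0 i - w k0 * μ k0 i :=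
      sum_one_support' k0 _ (fun k hk => by rw [hν_other k hk]; ring)
    have heq : ∑ k, w k * ν k i = (∑ k, w k * μ k i) + ∑ k, (w k * ν k i - w k * μ k i) := by
      rw [← Finset.sum_add_distrib]; exact Finset.sum_congr rfl fun k _ => by ring
    rw [heq, hd]
    by_cases h1 : i = i0
    · rw [if_pos h1, h1, hν_i0, h0, ← hc]; ring
    · rw [if_neg h1]
      by_cases h2 : i = j0
      · rw [if_pos h2, h2, hν_j0, ← haa, ← hc]; ring
      · rw [if_neg h2, hν_row i h1 h2]; ring
  have hF0 : ∀ i, 0 ≤ ∑ k, w k * μ k i := fun i =>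
    Finset.sum_nonneg fun k _ => mul_nonneg (hw k).le ((hμ k).1 i)
  have hF1 : ∀ i, ∑ k, w k * μ k i ≤ 1 := by
    intro i
    rw [← hwsum]
    refine Finset.sum_le_sum fun k _ => ?_
    have h1 : μ k i ≤ 1 := by
      rw [← (hμ k).2]
      exact Finset.single_le_sum (f := μ k) (fun j _ => (hμ k).1 j) (Finset.mem_univ i)
    nlinarith [(hw k).le, (hμ k).1 i]
  -- quadratic difference
  have hQd : ∑ i, (∑ k, w k * ν k i)^2 - ∑ i, (∑ k, w k * μ k i)^2
      = 2*c*t*((∑ k, w k * μ k i0) - (∑ k, w k * μ k j0)) + 2*c^2*t^2 := by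
    have h1 : ∑ i, ((∑ k, w k * ν k i)^2 - (∑ k, w k * μ k i)^2)
        = ((∑ k, w k * ν k i0)^2 - (∑ k, w k * μ k i0)^2)
          + ((∑ k, w k * ν k j0)^2 - (∑ k, w k * μ k j0)^2) := by
      refine sum_two_support' i0 j0 hij _ (fun x hx1 hx2 => ?_)
      rw [hFν x, if_neg hx1, if_neg hx2]; ring
    rw [← Finset.sum_sub_distrib, h1, hFν i0, hFν j0, if_pos rfl, if_neg (Ne.symm hij), if_pos rfl]
    ring
  -- linear difference
  have hLd : ∑ k, w k * ∑ i, q k i * ν k i - ∑ k, w k * ∑ i, q k i * μ k i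
      = c * t * (q k0 i0 - q k0 j0) := by
    have h1 : ∑ k, (w k * ∑ i, q k i * ν k i - w k * ∑ i, q k i * μ k i)
        = w k0 * ∑ i, q k0 i * ν k0 i - w k0 * ∑ i, q k0 i * μ k0 i :=
      sum_one_support' k0 _ (fun k hk => by rw [hν_other k hk]; ring)
    have h2 : ∑ i, (q k0 i * ν k0 i - q k0 i * μ k0 i)
        = (q k0 i0 * ν k0 i0 - q k0 i0 * μ k0 i0) + (q k0 j0 * ν k0 j0 - q k0 j0 * μ k0 j0) :=
      sum_two_support' i0 j0 hij _ (fun x hx1 hx2 => by rw [hν_row x hx1 hx2]; ring)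
    rw [← Finset.sum_sub_distrib, h1, ← mul_sub, ← Finset.sum_sub_distrib, h2,
      hν_i0, hν_j0, h0, ← haa, ← hc]
    ring
  -- entropy difference
  have hEd : ∑ k, w k * ∑ i, ν k i * Real.log (ν k i)
        - ∑ k, w k * ∑ i, μ k i * Real.log (μ k i)
      = c * (t * Real.log t + ((a - t) * Real.log (a - t) - a * Real.log a)) := by
    have h1 : ∑ k, (w k * ∑ i, ν k i * Real.log (ν k i)
          - w k * ∑ i, μ k i * Real.log (μ k i))
        = w k0 * ∑ i, ν k0 i * Real.log (ν k0 i)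
          - w k0 * ∑ i, μ k0 i * Real.log (μ k0 i) :=
      sum_one_support' k0 _ (fun k hk => by rw [hν_other k hk]; ring)
    have h2 : ∑ i, (ν k0 i * Real.log (ν k0 i) - μ k0 i * Real.log (μ k0 i))
        = (ν k0 i0 * Real.log (ν k0 i0) - μ k0 i0 * Real.log (μ k0 i0))
          + (ν k0 j0 * Real.log (ν k0 j0) - μ k0 j0 * Real.log (μ k0 j0)) :=
      sum_two_support' i0 j0 hij _ (fun x hx1 hx2 => by rw [hν_row x hx1 hx2]; ring)
    rw [← Finset.sum_sub_distrib, h1, ← mul_sub, ← Finset.sum_sub_distrib, h2,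
      hν_i0, hν_j0, h0, ← haa, ← hc]
    rw [Real.log_zero]
    ring
  -- entropy bound on the j0 piece
  have hEb : (a - t) * Real.log (a - t) - a * Real.log a ≤ t * |Real.log a| := by
    have hat : 0 < a - t := by linarith
    have hlog : Real.log (a - t) ≤ Real.log a := Real.log_le_log hat (by linarith)
    have h1 : (a - t) * Real.log (a - t) ≤ (a - t) * Real.log a :=
      mul_le_mul_of_nonneg_left hlog (by linarith)
    have h2 : -Real.log a ≤ |Real.log a| := neg_le_abs _
    nlinarith
  -- bounds
  have hQd' : (γ/2) * ∑ i, (∑ k, w k * ν k i)^2 - (γ/2) * ∑ i, (∑ k, w k * μ k i)^2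
      ≤ 2 * γ * t := by
    have e : (γ/2) * ∑ i, (∑ k, w k * ν k i)^2 - (γ/2) * ∑ i, (∑ k, w k * μ k i)^2
        = (γ/2) * (2*c*t*((∑ k, w k * μ k i0) - (∑ k, w k * μ k j0)) + 2*c^2*t^2) := by
      rw [← mul_sub, hQd]
    have hD1 : (∑ k, w k * μ k i0) - (∑ k, w k * μ k j0) ≤ 1 := by
      have := hF1 i0; have := hF0 j0; linarith
    rw [e]
    obtain ⟨D, hD⟩ : ∃ D, (∑ k, w k * μ k i0) - (∑ k, w k * μ k j0) = D := ⟨_, rfl⟩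
    rw [hD] at hD1 ⊢
    have h1 : c*t*D ≤ c*t := by nlinarith [mul_pos hc0 ht0]
    have h2 : c*t ≤ t := by nlinarith
    have h3 : c^2*t^2 ≤ c*t := by nlinarith [mul_pos hc0 ht0]
    have g1 := mul_le_mul_of_nonneg_left h1 hγ
    have g2 := mul_le_mul_of_nonneg_left h3 hγ
    have g3 := mul_le_mul_of_nonneg_left h2 hγ
    nlinarith [g1, g2, g3]
  have hLd' : -(∑ k, w k * ∑ i, q k i * ν k i) + ∑ k, w k * ∑ i, q k i * μ k i
      ≤ c * (|q k0 i0| + |q k0 j0|) * t := by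
    have hyx : q k0 j0 - q k0 i0 ≤ |q k0 i0| + |q k0 j0| := by
      have := le_abs_self (q k0 j0); have := neg_abs_le (q k0 i0); linarith
    have h1 := mul_le_mul_of_nonneg_left hyx (mul_pos hc0 ht0).le
    linarith [hLd, h1]
  have hEd' : lam * ∑ k, w k * ∑ i, ν k i * Real.log (ν k i)
        - lam * ∑ k, w k * ∑ i, μ k i * Real.log (μ k i)
      ≤ lam * c * t * Real.log t + lam * c * |Real.log a| * t := by
    have e : lam * ∑ k, w k * ∑ i, ν k i * Real.log (ν k i)
          - lam * ∑ k, w k * ∑ i, μ k i * Real.log (μ k i)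
        = lam * c * (t * Real.log t) + lam * c * ((a - t) * Real.log (a - t) - a * Real.log a) := by
      rw [← mul_sub, hEd]; ring
    have h1 := mul_le_mul_of_nonneg_left hEb (mul_pos hlam hc0).le
    linarith [e, h1]
  have hkey : lam * c * t * Real.log t
      + (2*γ + c*(|q k0 i0| + |q k0 j0|) + lam * c * |Real.log a|) * t ≤ -t := by
    have h1 := mul_le_mul_of_nonneg_right hlogt ht0.le
    rw [hC] at h1
    linarith [h1]
  have hmin' := hmin ν hνS
  linarith [hQd', hLd', hEd', hkey, hmin', ht0]

private lemma convex_simplex (M K : ℕ) :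
    Convex ℝ {μ : Fin K → Fin M → ℝ | ∀ k, (∀ i, 0 ≤ μ k i) ∧ ∑ i, μ k i = 1} := by
  intro μ hμ ν hν a b ha hb hab k
  constructor
  · intro i
    have h1 := (hμ k).1 i; have h2 := (hν k).1 i
    simp only [Pi.add_apply, Pi.smul_apply, smul_eq_mul]
    have := mul_nonneg ha h1; have := mul_nonneg hb h2
    linarith
  · simp only [Pi.add_apply, Pi.smul_apply, smul_eq_mul]
    rw [Finset.sum_add_distrib, ← Finset.mul_sum, ← Finset.mul_sum, (hμ k).2, (hν k).2]
    simpa using hab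

private lemma strictConvex_psi (M K : ℕ)
    (w : Fin K → ℝ) (hw : ∀ k, 0 < w k)
    (q : Fin K → Fin M → ℝ) (γ : ℝ) (hγ : 0 ≤ γ) (lam : ℝ) (hlam : 0 < lam) :
    StrictConvexOn ℝ {μ : Fin K → Fin M → ℝ | ∀ k, (∀ i, 0 ≤ μ k i) ∧ ∑ i, μ k i = 1}
      (fun μ : Fin K → Fin M → ℝ =>
        (γ / 2) * ∑ i, (∑ k, w k * μ k i) ^ 2
        - ∑ k, w k * ∑ i, q k i * μ k i
        + lam * ∑ k, w k * ∑ i, μ k i * Real.log (μ k i)) := by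
  refine ⟨convex_simplex M K, ?_⟩
  intro μ hμ ν hν hne a b ha hb hab
  simp only [smul_eq_mul]
  -- pointwise mix formula
  have hmix : ∀ k i, (a • μ + b • ν) k i = a * μ k i + b * ν k i := by
    intro k i; simp [smul_eq_mul]
  -- Quadratic part
  have hQcol : ∀ i, ∑ k, w k * (a • μ + b • ν) k i
      = a * (∑ k, w k * μ k i) + b * (∑ k, w k * ν k i) := by
    intro i
    rw [Finset.mul_sum, Finset.mul_sum, ← Finset.sum_add_distrib]
    exact Finset.sum_congr rfl fun k _ => by rw [hmix]; ring
  have hQtot : (γ / 2) * ∑ i, (∑ k, w k * (a • μ + b • ν) k i) ^ 2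
      ≤ a * ((γ / 2) * ∑ i, (∑ k, w k * μ k i) ^ 2)
        + b * ((γ / 2) * ∑ i, (∑ k, w k * ν k i) ^ 2) := by
    have h1 : ∑ i, (∑ k, w k * (a • μ + b • ν) k i) ^ 2
        ≤ a * ∑ i, (∑ k, w k * μ k i) ^ 2 + b * ∑ i, (∑ k, w k * ν k i) ^ 2 := by
      rw [Finset.mul_sum, Finset.mul_sum, ← Finset.sum_add_distrib]
      refine Finset.sum_le_sum fun i _ => ?_
      rw [hQcol]
      nlinarith [sq_nonneg ((∑ k, w k * μ k i) - (∑ k, w k * ν k i)), mul_nonneg ha.le hb.le]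
    calc (γ / 2) * ∑ i, (∑ k, w k * (a • μ + b • ν) k i) ^ 2
        ≤ (γ / 2) * (a * ∑ i, (∑ k, w k * μ k i) ^ 2 + b * ∑ i, (∑ k, w k * ν k i) ^ 2) :=
          mul_le_mul_of_nonneg_left h1 (by positivity)
      _ = a * ((γ / 2) * ∑ i, (∑ k, w k * μ k i) ^ 2)
          + b * ((γ / 2) * ∑ i, (∑ k, w k * ν k i) ^ 2) := by ring
  -- Linear part (equality)
  have hLtot : ∑ k, w k * ∑ i, q k i * (a • μ + b • ν) k i
      = a * ∑ k, w k * ∑ i, q k i * μ k i + b * ∑ k, w k * ∑ i, q k i * ν k i := by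
    rw [Finset.mul_sum, Finset.mul_sum, ← Finset.sum_add_distrib]
    refine Finset.sum_congr rfl fun k _ => ?_
    have : ∑ i, q k i * (a • μ + b • ν) k i
        = a * ∑ i, q k i * μ k i + b * ∑ i, q k i * ν k i := by
      rw [Finset.mul_sum, Finset.mul_sum, ← Finset.sum_add_distrib]
      exact Finset.sum_congr rfl fun i _ => by rw [hmix]; ring
    rw [this]; ring
  -- Entropy part (strict)
  obtain ⟨k0, i0, hki⟩ : ∃ k i, μ k i ≠ ν k i := by
    by_contra h; push_neg at h
    exact hne (funext fun k => funext fun i => h k i)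
  have hment : ∀ k i, (a * μ k i + b * ν k i) * Real.log (a * μ k i + b * ν k i)
      ≤ a * (μ k i * Real.log (μ k i)) + b * (ν k i * Real.log (ν k i)) := by
    intro k i
    have := Real.convexOn_mul_log.2 (Set.mem_Ici.2 ((hμ k).1 i)) (Set.mem_Ici.2 ((hν k).1 i))
      ha.le hb.le hab
    simpa [smul_eq_mul] using this
  have hstrict : (a * μ k0 i0 + b * ν k0 i0) * Real.log (a * μ k0 i0 + b * ν k0 i0)
      < a * (μ k0 i0 * Real.log (μ k0 i0)) + b * (ν k0 i0 * Real.log (ν k0 i0)) := by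
    have := Real.strictConvexOn_mul_log.2 (Set.mem_Ici.2 ((hμ k0).1 i0))
      (Set.mem_Ici.2 ((hν k0).1 i0)) hki ha hb hab
    simpa [smul_eq_mul] using this
  have hinner_le : ∀ k, ∑ i, (a • μ + b • ν) k i * Real.log ((a • μ + b • ν) k i)
      ≤ a * ∑ i, μ k i * Real.log (μ k i) + b * ∑ i, ν k i * Real.log (ν k i) := by
    intro k
    rw [Finset.mul_sum, Finset.mul_sum, ← Finset.sum_add_distrib]
    refine Finset.sum_le_sum fun i _ => ?_
    rw [hmix]; exact hment k i
  have hinner_lt : ∑ i, (a • μ + b • ν) k0 i * Real.log ((a • μ + b • ν) k0 i)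
      < a * ∑ i, μ k0 i * Real.log (μ k0 i) + b * ∑ i, ν k0 i * Real.log (ν k0 i) := by
    rw [Finset.mul_sum, Finset.mul_sum, ← Finset.sum_add_distrib]
    refine Finset.sum_lt_sum (fun i _ => by rw [hmix]; exact hment k0 i)
      ⟨i0, Finset.mem_univ _, by rw [hmix]; exact hstrict⟩
  have hEtot : lam * ∑ k, w k * ∑ i, (a • μ + b • ν) k i * Real.log ((a • μ + b • ν) k i)
      < a * (lam * ∑ k, w k * ∑ i, μ k i * Real.log (μ k i))
        + b * (lam * ∑ k, w k * ∑ i, ν k i * Real.log (ν k i)) := by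
    have h1 : ∑ k, w k * ∑ i, (a • μ + b • ν) k i * Real.log ((a • μ + b • ν) k i)
        < ∑ k, w k * (a * ∑ i, μ k i * Real.log (μ k i) + b * ∑ i, ν k i * Real.log (ν k i)) := by
      refine Finset.sum_lt_sum (fun k _ => mul_le_mul_of_nonneg_left (hinner_le k) (hw k).le)
        ⟨k0, Finset.mem_univ _, mul_lt_mul_of_pos_left hinner_lt (hw k0)⟩
    have h2 : ∑ k, w k * (a * ∑ i, μ k i * Real.log (μ k i) + b * ∑ i, ν k i * Real.log (ν k i))
        = a * ∑ k, w k * ∑ i, μ k i * Real.log (μ k i)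
          + b * ∑ k, w k * ∑ i, ν k i * Real.log (ν k i) := by
      rw [Finset.mul_sum, Finset.mul_sum, ← Finset.sum_add_distrib]
      exact Finset.sum_congr rfl fun k _ => by ring
    calc lam * ∑ k, w k * ∑ i, (a • μ + b • ν) k i * Real.log ((a • μ + b • ν) k i)
        < lam * ∑ k, w k * (a * ∑ i, μ k i * Real.log (μ k i)
            + b * ∑ i, ν k i * Real.log (ν k i)) := by
          exact mul_lt_mul_of_pos_left h1 hlam
      _ = a * (lam * ∑ k, w k * ∑ i, μ k i * Real.log (μ k i))
          + b * (lam * ∑ k, w k * ∑ i, ν k i * Real.log (ν k i)) := by rw [h2]; ring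
  linarith


private lemma compact_simplex (M K : ℕ) :
    IsCompact {μ : Fin K → Fin M → ℝ | ∀ k, (∀ i, 0 ≤ μ k i) ∧ ∑ i, μ k i = 1} := by
  have hclosed : IsClosed {μ : Fin K → Fin M → ℝ | ∀ k, (∀ i, 0 ≤ μ k i) ∧ ∑ i, μ k i = 1} := by
    have : {μ : Fin K → Fin M → ℝ | ∀ k, (∀ i, 0 ≤ μ k i) ∧ ∑ i, μ k i = 1}
        = (⋂ k, ⋂ i, {μ : Fin K → Fin M → ℝ | 0 ≤ μ k i})
          ∩ ⋂ k, {μ : Fin K → Fin M → ℝ | ∑ i, μ k i = 1} := by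
      ext μ; simp only [Set.mem_setOf_eq, Set.mem_inter_iff, Set.mem_iInter]
      exact ⟨fun h => ⟨fun k i => (h k).1 i, fun k => (h k).2⟩, fun h k => ⟨h.1 k, h.2 k⟩⟩
    rw [this]
    refine IsClosed.inter (isClosed_iInter fun k => isClosed_iInter fun i => ?_)
      (isClosed_iInter fun k => ?_)
    · exact isClosed_le continuous_const ((continuous_apply i).comp (continuous_apply k))
    · exact isClosed_eq (continuous_finset_sum _ fun i _ =>
        (continuous_apply i).comp (continuous_apply k)) continuous_const
  have hsub : {μ : Fin K → Fin M → ℝ | ∀ k, (∀ i, 0 ≤ μ k i) ∧ ∑ i, μ k i = 1}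
      ⊆ Set.univ.pi fun _ : Fin K => Set.univ.pi fun _ : Fin M => Set.Icc (0:ℝ) 1 := by
    intro μ hμ
    intro k _
    intro i _
    refine ⟨(hμ k).1 i, ?_⟩
    have := Finset.single_le_sum (f := μ k) (fun j _ => (hμ k).1 j) (Finset.mem_univ i)
    rw [(hμ k).2] at this; exact this
  exact IsCompact.of_isClosed_subset
    (isCompact_univ_pi fun _ => isCompact_univ_pi fun _ => isCompact_Icc) hclosed hsub

private lemma nonempty_simplex (M K : ℕ) (hM : 2 ≤ M) :
    (fun _ _ => (M : ℝ)⁻¹) ∈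
      {μ : Fin K → Fin M → ℝ | ∀ k, (∀ i, 0 ≤ μ k i) ∧ ∑ i, μ k i = 1} := by
  intro k
  have hM0 : (0:ℝ) < (M:ℝ) := by
    have : 0 < M := by omega
    exact_mod_cast this
  refine ⟨fun i => by positivity, ?_⟩
  rw [Finset.sum_const, Finset.card_univ, Fintype.card_fin, nsmul_eq_mul]
  field_simp

private lemma cont_psi (M K : ℕ) (w : Fin K → ℝ) (q : Fin K → Fin M → ℝ)
    (γ lam : ℝ) :
    Continuous (fun μ : Fin K → Fin M → ℝ =>
        (γ / 2) * ∑ i, (∑ k, w k * μ k i) ^ 2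
        - ∑ k, w k * ∑ i, q k i * μ k i
        + lam * ∑ k, w k * ∑ i, μ k i * Real.log (μ k i)) := by
  refine Continuous.add (Continuous.sub ?_ ?_) ?_
  · exact continuous_const.mul (continuous_finset_sum _ fun i _ =>
      (continuous_finset_sum _ fun k _ =>
        continuous_const.mul ((continuous_apply i).comp (continuous_apply k))).pow 2)
  · exact continuous_finset_sum _ fun k _ => continuous_const.mul
      (continuous_finset_sum _ fun i _ =>
        continuous_const.mul ((continuous_apply i).comp (continuous_apply k)))
  · exact continuous_const.mul (continuous_finset_sum _ fun k _ =>
      continuous_const.mul (continuous_finset_sum _ fun i _ =>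
        Real.continuous_mul_log.comp ((continuous_apply i).comp (continuous_apply k))))


/-- The multi-type Rosenthal potential
`Ψ(μ) = (γ/2) ∑_i f_i² − ∑_k w_k ∑_i q_i^(k) μ_i^(k) + λ ∑_k w_k ∑_i μ_i^(k) log μ_i^(k)`,
with aggregate load `f_i = ∑_k w_k μ_i^(k)`, is strictly convex on the `K`-fold product
of probability simplices, attains its minimum at a unique point, and that minimizer has
all entries strictly positive. -/
theorem multitype_potential_strictConvex_unique_interior
    (M K : ℕ) (hM : 2 ≤ M) (hK : 1 ≤ K)
    (w : Fin K → ℝ) (hw : ∀ k, 0 < w k) (hwsum : ∑ k, w k = 1)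
    (q : Fin K → Fin M → ℝ) (γ : ℝ) (hγ : 0 ≤ γ) (lam : ℝ) (hlam : 0 < lam) :
    StrictConvexOn ℝ {μ : Fin K → Fin M → ℝ | ∀ k, (∀ i, 0 ≤ μ k i) ∧ ∑ i, μ k i = 1}
      (fun μ : Fin K → Fin M → ℝ =>
        (γ / 2) * ∑ i, (∑ k, w k * μ k i) ^ 2
        - ∑ k, w k * ∑ i, q k i * μ k i
        + lam * ∑ k, w k * ∑ i, μ k i * Real.log (μ k i))
    ∧
    (∃ μstar : Fin K → Fin M → ℝ,
      (μstar ∈ {μ : Fin K → Fin M → ℝ | ∀ k, (∀ i, 0 ≤ μ k i) ∧ ∑ i, μ k i = 1} ∧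
        ∀ ν ∈ {μ : Fin K → Fin M → ℝ | ∀ k, (∀ i, 0 ≤ μ k i) ∧ ∑ i, μ k i = 1},
          ((γ / 2) * ∑ i, (∑ k, w k * μstar k i) ^ 2
            - ∑ k, w k * ∑ i, q k i * μstar k i
            + lam * ∑ k, w k * ∑ i, μstar k i * Real.log (μstar k i)) ≤
          ((γ / 2) * ∑ i, (∑ k, w k * ν k i) ^ 2
            - ∑ k, w k * ∑ i, q k i * ν k i
            + lam * ∑ k, w k * ∑ i, ν k i * Real.log (ν k i)))
      ∧
      (∀ ν : Fin K → Fin M → ℝ,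
        (ν ∈ {μ : Fin K → Fin M → ℝ | ∀ k, (∀ i, 0 ≤ μ k i) ∧ ∑ i, μ k i = 1} ∧
          ∀ ρ ∈ {μ : Fin K → Fin M → ℝ | ∀ k, (∀ i, 0 ≤ μ k i) ∧ ∑ i, μ k i = 1},
            ((γ / 2) * ∑ i, (∑ k, w k * ν k i) ^ 2
              - ∑ k, w k * ∑ i, q k i * ν k i
              + lam * ∑ k, w k * ∑ i, ν k i * Real.log (ν k i)) ≤
            ((γ / 2) * ∑ i, (∑ k, w k * ρ k i) ^ 2
              - ∑ k, w k * ∑ i, q k i * ρ k i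
              + lam * ∑ k, w k * ∑ i, ρ k i * Real.log (ρ k i))) → ν = μstar)
      ∧
      (∀ k i, 0 < μstar k i)) := by
  classical
  set S := {μ : Fin K → Fin M → ℝ | ∀ k, (∀ i, 0 ≤ μ k i) ∧ ∑ i, μ k i = 1} with hS
  set Ψ : (Fin K → Fin M → ℝ) → ℝ := fun μ =>
        (γ / 2) * ∑ i, (∑ k, w k * μ k i) ^ 2
        - ∑ k, w k * ∑ i, q k i * μ k i
        + lam * ∑ k, w k * ∑ i, μ k i * Real.log (μ k i) with hΨ
  have hsc : StrictConvexOn ℝ S Ψ := strictConvex_psi M K w hw q γ hγ lam hlam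
  obtain ⟨μstar, hmemS, hminS⟩ :=
    (compact_simplex M K).exists_isMinOn ⟨_, nonempty_simplex M K hM⟩
      (cont_psi M K w q γ lam).continuousOn
  have hmin : ∀ ν ∈ S, Ψ μstar ≤ Ψ ν := fun ν hν => hminS hν
  refine ⟨hsc, μstar, ⟨hmemS, hmin⟩, ?_, ?_⟩
  · -- uniqueness
    intro ν ⟨hνS, hνmin⟩
    by_contra hne
    have hmid : ((1:ℝ)/2) • ν + ((1:ℝ)/2) • μstar ∈ S :=
      convex_simplex M K hνS hmemS (by norm_num) (by norm_num) (by norm_num)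
    have hlt := hsc.2 hνS hmemS hne (by norm_num : (0:ℝ) < 1/2)
      (by norm_num : (0:ℝ) < 1/2) (by norm_num)
    have h1 : Ψ μstar ≤ Ψ (((1:ℝ)/2) • ν + ((1:ℝ)/2) • μstar) := hmin _ hmid
    have h2 : Ψ ν ≤ Ψ μstar := hνmin μstar hmemS
    have h3 : Ψ μstar ≤ Ψ ν := hmin ν hνS
    simp only [smul_eq_mul] at hlt
    clear_value Ψ S
    have hub : (1:ℝ)/2 * Ψ ν + (1:ℝ)/2 * Ψ μstar ≤ Ψ μstar := by linarith
    exact absurd (lt_of_lt_of_le hlt hub) (not_lt.2 h1)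
  · -- interiority
    exact min_interior M K hM w hw hwsum q γ hγ lam hlam μstar hmemS
      (fun ν hν => hmin ν hν)
end

section
/- Let M ≥ 2, K ≥ 1, strictly positive weights w : Fin K → ℝ with ∑_k w_k = 1, quality vectors q^(k) : Fin M → ℝ, γ ≥ 0, λ > 0, and let (μ^{*(1)}, …, μ^{*(K)}) be the unique minimizer in the interior of Δ_M^K of the multi-type Rosenthal potential Ψ(μ^(1),…,μ^(K)) = (γ/2)∑_i f_i² − ∑_k w_k ∑_i q_i^(k) μ_i^(k) + λ ∑_k w_k ∑_i μ_i^(k) log μ_i^(k), where f_i = ∑_k w_k μ_i^(k). Then with f*_i = ∑_k w_k μ_i^{*(k)}, for each type k and each expert i one has μ_i^{*(k)} = exp((q_i^(k) − γ f*_i)/λ) / ∑_j exp((q_j^(k) − γ f*_j)/λ). -/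
/-!
At an interior minimizer, shifting mass `t` from expert `j` to expert `i` inside one type `k`
stays in `Δ_M^K` for small `|t|`, so the derivative of `Ψ` along that line vanishes at `t = 0`.
This derivative is the difference of the partial derivatives
`w_k (γ f_i - q_i^(k) + λ (log μ_i^(k) + 1))` at `i` and at `j`; hence
`log μ_i^(k) - (q_i^(k) - γ f_i) / λ` does not depend on `i`, and exponentiating and normalizing
gives the softmax formula.
-/

open Finset Filter Real Topology

theorem eq_exp_div_sum_exp_of_log_sub_eq {ι : Type*} [Fintype ι] {μ a : ι → ℝ}
    (hpos : ∀ i, 0 < μ i) (hsum : ∑ i, μ i = 1) (h : ∀ i j, log (μ i) - a i = log (μ j) - a j) :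
    ∀ i, μ i = exp (a i) / ∑ j, exp (a j) := by
  intro i
  set c := exp (log (μ i) - a i)
  have hμ : ∀ j, μ j = exp (a j) * c := fun j => by
    rw [← exp_add, ← h j i, add_sub_cancel, exp_log (hpos j)]
  have hZ : (∑ j, exp (a j)) * c = 1 := by
    rw [sum_mul, ← hsum]
    exact sum_congr rfl fun j _ => (hμ j).symm
  rw [eq_div_iff (left_ne_zero_of_mul_eq_one hZ), hμ i]
  linear_combination exp (a i) * hZ

section RoutingGame

variable {κ ι : Type*} [Fintype κ] [Fintype ι]

noncomputable def aggregateLoad (w : κ → ℝ) (ν : κ → ι → ℝ) (i : ι) : ℝ :=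
  ∑ k, w k * ν k i

noncomputable def rosenthalPotential (w : κ → ℝ) (q : κ → ι → ℝ) (γ lam : ℝ)
    (ν : κ → ι → ℝ) : ℝ :=
  (γ / 2) * ∑ i, aggregateLoad w ν i ^ 2 - ∑ k, w k * ∑ i, q k i * ν k i
    + lam * ∑ k, w k * ∑ i, ν k i * log (ν k i)

noncomputable def rosenthalPotentialGrad (w : κ → ℝ) (q : κ → ι → ℝ) (γ lam : ℝ)
    (μ : κ → ι → ℝ) (k : κ) (i : ι) : ℝ :=
  w k * (γ * aggregateLoad w μ i - q k i + lam * (log (μ k i) + 1))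

theorem hasDerivAt_rosenthalPotential_add_smul (w : κ → ℝ) (q : κ → ι → ℝ) (γ lam : ℝ)
    {μ : κ → ι → ℝ} (hμ : ∀ k i, μ k i ≠ 0) (d : κ → ι → ℝ) :
    HasDerivAt (fun t : ℝ => rosenthalPotential w q γ lam (μ + t • d))
      (∑ k, ∑ i, rosenthalPotentialGrad w q γ lam μ k i * d k i) 0 := by
  have hcoord : ∀ k i, HasDerivAt (fun t : ℝ => μ k i + t * d k i) (d k i) 0 := fun k i => by
    simpa using ((hasDerivAt_id (0 : ℝ)).mul_const (d k i)).const_add (μ k i)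
  have hload : ∀ i, HasDerivAt (fun t : ℝ => ∑ k, w k * (μ k i + t * d k i))
      (∑ k, w k * d k i) 0 := fun i =>
    HasDerivAt.fun_sum fun k _ => (hcoord k i).const_mul (w k)
  have hentropy : ∀ k i, HasDerivAt (fun t : ℝ => (μ k i + t * d k i) * log (μ k i + t * d k i))
      ((log (μ k i) + 1) * d k i) 0 := fun k i => by
    simpa [Function.comp_def] using
      (hasDerivAt_mul_log (by simpa using hμ k i)).comp (0 : ℝ) (hcoord k i)
  have hquad : HasDerivAt (fun t : ℝ => (γ / 2) * ∑ i, (∑ k, w k * (μ k i + t * d k i)) ^ 2)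
      (∑ i, γ * aggregateLoad w μ i * ∑ k, w k * d k i) 0 := by
    refine ((HasDerivAt.fun_sum fun i _ => (hload i).pow 2).const_mul (γ / 2)).congr_deriv ?_
    simp only [zero_mul, add_zero, mul_sum]
    refine sum_congr rfl fun i _ => sum_congr rfl fun k _ => ?_
    simp only [aggregateLoad]
    ring
  have hlin : HasDerivAt (fun t : ℝ => ∑ k, w k * ∑ i, q k i * (μ k i + t * d k i))
      (∑ k, w k * ∑ i, q k i * d k i) 0 :=
    HasDerivAt.fun_sum fun k _ => (HasDerivAt.fun_sum fun i _ =>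
      (hcoord k i).const_mul (q k i)).const_mul (w k)
  have hent : HasDerivAt
      (fun t : ℝ => lam * ∑ k, w k * ∑ i, (μ k i + t * d k i) * log (μ k i + t * d k i))
      (lam * ∑ k, w k * ∑ i, (log (μ k i) + 1) * d k i) 0 :=
    (HasDerivAt.fun_sum fun k _ => (HasDerivAt.fun_sum fun i _ =>
      hentropy k i).const_mul (w k)).const_mul lam
  refine ((hquad.sub hlin).add hent).congr_deriv ?_
  simp only [rosenthalPotentialGrad, mul_sum]
  rw [sum_comm, ← sum_sub_distrib, ← sum_add_distrib]
  refine sum_congr rfl fun k _ => ?_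
  rw [← sum_sub_distrib, ← sum_add_distrib]
  exact sum_congr rfl fun i _ => by ring

theorem eventually_add_smul_mem_pi_stdSimplex {μ d : κ → ι → ℝ} (hpos : ∀ k i, 0 < μ k i)
    (hsum : ∀ k, ∑ i, μ k i = 1) (hd : ∀ k, ∑ i, d k i = 0) :
    ∀ᶠ t in 𝓝 (0 : ℝ), μ + t • d ∈ Set.univ.pi fun _ => stdSimplex ℝ ι := by
  have hposLine : ∀ᶠ t in 𝓝 (0 : ℝ), ∀ k i, 0 < μ k i + t * d k i := by
    simp only [eventually_all]
    intro k i
    have hcont : ContinuousAt (fun t : ℝ => μ k i + t * d k i) 0 := by fun_prop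
    exact continuousAt_const.eventually_lt hcont (by simpa using hpos k i)
  filter_upwards [hposLine] with t ht k _
  refine ⟨fun i => (ht k i).le, ?_⟩
  simp [sum_add_distrib, ← mul_sum, hsum k, hd k]

theorem sum_rosenthalPotentialGrad_mul_eq_zero {w : κ → ℝ} {q : κ → ι → ℝ} {γ lam : ℝ}
    {μ : κ → ι → ℝ} (hpos : ∀ k i, 0 < μ k i) (hsum : ∀ k, ∑ i, μ k i = 1)
    (hmin : IsMinOn (rosenthalPotential w q γ lam) (Set.univ.pi fun _ => stdSimplex ℝ ι) μ)
    {d : κ → ι → ℝ} (hd : ∀ k, ∑ i, d k i = 0) :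
    ∑ k, ∑ i, rosenthalPotentialGrad w q γ lam μ k i * d k i = 0 := by
  have hloc : IsLocalMin (fun t : ℝ => rosenthalPotential w q γ lam (μ + t • d)) 0 := by
    filter_upwards [eventually_add_smul_mem_pi_stdSimplex hpos hsum hd] with t ht
    simpa using hmin ht
  exact hloc.hasDerivAt_eq_zero
    (hasDerivAt_rosenthalPotential_add_smul w q γ lam (fun k i => (hpos k i).ne') d)

theorem log_sub_eq_of_isMinOn_rosenthalPotential {w : κ → ℝ} {q : κ → ι → ℝ} {γ lam : ℝ}
    {μ : κ → ι → ℝ} (hpos : ∀ k i, 0 < μ k i) (hsum : ∀ k, ∑ i, μ k i = 1)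
    (hmin : IsMinOn (rosenthalPotential w q γ lam) (Set.univ.pi fun _ => stdSimplex ℝ ι) μ)
    {k : κ} (hwk : w k ≠ 0) (hlam : lam ≠ 0) (i j : ι) :
    log (μ k i) - (q k i - γ * aggregateLoad w μ i) / lam =
      log (μ k j) - (q k j - γ * aggregateLoad w μ j) / lam := by
  classical
  have hgrad :
      rosenthalPotentialGrad w q γ lam μ k i = rosenthalPotentialGrad w q γ lam μ k j := by
    have h := sum_rosenthalPotentialGrad_mul_eq_zero hpos hsum hmin
      (d := Pi.single k (Pi.single i 1 - Pi.single j 1)) fun k' => by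
        by_cases hk : k' = k <;> simp [hk, Pi.single_apply, sum_sub_distrib]
    simpa [Pi.single_apply, ite_apply, mul_ite, sum_ite_eq', mul_sub, sum_sub_distrib,
      sub_eq_zero] using h
  simp only [rosenthalPotentialGrad] at hgrad
  have hcancel := mul_left_cancel₀ hwk hgrad
  field_simp
  linarith

end RoutingGame

theorem multitype_minimizer_softmax_characterization_general
    (M K : ℕ)
    (w : Fin K → ℝ) (hw : ∀ k, 0 < w k)
    (q : Fin K → Fin M → ℝ) (γ : ℝ) (lam : ℝ) (hlam : 0 < lam)
    (μstar : Fin K → Fin M → ℝ)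
    (hpos : ∀ k i, 0 < μstar k i) (hsum : ∀ k, ∑ i, μstar k i = 1)
    (hmin : ∀ ν : Fin K → Fin M → ℝ,
      (∀ k, (∀ i, 0 ≤ ν k i) ∧ ∑ i, ν k i = 1) →
      ((γ / 2) * ∑ i, (∑ k, w k * μstar k i) ^ 2
        - ∑ k, w k * ∑ i, q k i * μstar k i
        + lam * ∑ k, w k * ∑ i, μstar k i * Real.log (μstar k i)) ≤
      ((γ / 2) * ∑ i, (∑ k, w k * ν k i) ^ 2
        - ∑ k, w k * ∑ i, q k i * ν k i
        + lam * ∑ k, w k * ∑ i, ν k i * Real.log (ν k i))) :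
    ∀ k i, μstar k i =
      Real.exp ((q k i - γ * ∑ k', w k' * μstar k' i) / lam) /
        ∑ j, Real.exp ((q k j - γ * ∑ k', w k' * μstar k' j) / lam) := by
  have hminOn : IsMinOn (rosenthalPotential w q γ lam)
      (Set.univ.pi fun _ => stdSimplex ℝ (Fin M)) μstar :=
    fun ν hν => hmin ν fun k => hν k (Set.mem_univ k)
  intro k
  exact eq_exp_div_sum_exp_of_log_sub_eq (hpos k) (hsum k)
    (log_sub_eq_of_isMinOn_rosenthalPotential hpos hsum hminOn (hw k).ne' hlam.ne')

/-- The interior minimizer `μ*` of the multi-type Rosenthal potential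
satisfies, for each type `k` and expert `i`, the softmax characterization
`μ*_i^(k) = exp((q_i^(k) − γ f*_i)/λ) / ∑_j exp((q_j^(k) − γ f*_j)/λ)`,
where `f*_i = ∑_k w_k μ*_i^(k)` is the aggregate load. -/
theorem multitype_minimizer_softmax_characterization
    (M K : ℕ) (hM : 2 ≤ M) (hK : 1 ≤ K)
    (w : Fin K → ℝ) (hw : ∀ k, 0 < w k) (hwsum : ∑ k, w k = 1)
    (q : Fin K → Fin M → ℝ) (γ : ℝ) (hγ : 0 ≤ γ) (lam : ℝ) (hlam : 0 < lam)
    (μstar : Fin K → Fin M → ℝ)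
    (hpos : ∀ k i, 0 < μstar k i) (hsum : ∀ k, ∑ i, μstar k i = 1)
    (hmin : ∀ ν : Fin K → Fin M → ℝ,
      (∀ k, (∀ i, 0 ≤ ν k i) ∧ ∑ i, ν k i = 1) →
      ((γ / 2) * ∑ i, (∑ k, w k * μstar k i) ^ 2
        - ∑ k, w k * ∑ i, q k i * μstar k i
        + lam * ∑ k, w k * ∑ i, μstar k i * Real.log (μstar k i)) ≤
      ((γ / 2) * ∑ i, (∑ k, w k * ν k i) ^ 2
        - ∑ k, w k * ∑ i, q k i * ν k i
        + lam * ∑ k, w k * ∑ i, ν k i * Real.log (ν k i))) :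
    ∀ k i, μstar k i =
      Real.exp ((q k i - γ * ∑ k', w k' * μstar k' i) / lam) /
        ∑ j, Real.exp ((q k j - γ * ∑ k', w k' * μstar k' j) / lam) :=
  multitype_minimizer_softmax_characterization_general M K w hw q γ lam hlam μstar hpos hsum hmin
end

section
/- Let M ≥ 2, K ≥ 1, strictly positive weights w : Fin K → ℝ with ∑_k w_k = 1, γ ≥ 0 and λ > 0. Suppose all types share the same quality vector: q^(k) = q for every k. Then the unique minimizer (μ^{*(1)}, …, μ^{*(K)}) of the multi-type Rosenthal potential on Δ_M^K satisfies μ^{*(k)} = μ* for every k, where μ* is the unique single-type MFG equilibrium, i.e. the unique vector in the interior of Δ_M with μ*_i = exp((q_i − γ μ*_i)/λ) / ∑_j exp((q_j − γ μ*_j)/λ) for all i. -/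
lemma entropy_tangent_pos {x y : ℝ} (hx : 0 ≤ x) (hy : 0 < y) (hne : x ≠ y) :
    0 < x * Real.log x - x * Real.log y - x + y := by
  rcases eq_or_lt_of_le hx with h0 | hxpos
  · rw [← h0]; simpa using hy
  · have hyx : 0 < y / x := div_pos hy hxpos
    have hne1 : y / x ≠ 1 := by
      intro h
      rw [div_eq_one_iff_eq (ne_of_gt hxpos)] at h
      exact hne h.symm
    have hlog := Real.log_lt_sub_one_of_pos hyx hne1
    rw [Real.log_div (ne_of_gt hy) (ne_of_gt hxpos)] at hlog
    have h2 : x * (Real.log y - Real.log x) < x * (y / x - 1) :=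
      (mul_lt_mul_iff_right₀ hxpos).2 hlog
    have h3 : x * (y / x - 1) = y - x := by field_simp
    nlinarith [h2]

lemma entropy_tangent_nonneg {x y : ℝ} (hx : 0 ≤ x) (hy : 0 < y) :
    0 ≤ x * Real.log x - x * Real.log y - x + y := by
  rcases eq_or_ne x y with rfl | hne
  · have : x * Real.log x - x * Real.log x - x + x = 0 := by ring
    rw [this]
  · exact (entropy_tangent_pos hx hy hne).le


/-- Recovery: if all types share the same quality vector `q`, then each
component of the unique minimizer of the multi-type Rosenthal potential equals the
single-type MFG equilibrium `μ*`, the unique interior fixed point of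
`μ ↦ softmax((q − γμ)/λ)`. -/
theorem multitype_recovery_single_type
    (M K : ℕ) (hM : 2 ≤ M) (hK : 1 ≤ K)
    (w : Fin K → ℝ) (hw : ∀ k, 0 < w k) (hwsum : ∑ k, w k = 1)
    (q : Fin M → ℝ) (γ : ℝ) (hγ : 0 ≤ γ) (lam : ℝ) (hlam : 0 < lam)
    -- `μstar` is the minimizer of the multi-type Rosenthal potential (all types with
    -- quality vector `q`) over the K-fold product of simplices:
    (μstar : Fin K → Fin M → ℝ)
    (hμstar_mem : ∀ k, (∀ i, 0 ≤ μstar k i) ∧ ∑ i, μstar k i = 1)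
    (hmin : ∀ ν : Fin K → Fin M → ℝ,
      (∀ k, (∀ i, 0 ≤ ν k i) ∧ ∑ i, ν k i = 1) →
      ((γ / 2) * ∑ i, (∑ k, w k * μstar k i) ^ 2
        - ∑ k, w k * ∑ i, q i * μstar k i
        + lam * ∑ k, w k * ∑ i, μstar k i * Real.log (μstar k i)) ≤
      ((γ / 2) * ∑ i, (∑ k, w k * ν k i) ^ 2
        - ∑ k, w k * ∑ i, q i * ν k i
        + lam * ∑ k, w k * ∑ i, ν k i * Real.log (ν k i)))
    -- `μeq` is the single-type MFG equilibrium: an interior fixed point of the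
    -- softmax best-response map:
    (μeq : Fin M → ℝ) (hpos : ∀ i, 0 < μeq i) (hsum : ∑ i, μeq i = 1)
    (heq : ∀ i, μeq i = Real.exp ((q i - γ * μeq i) / lam) /
        ∑ j, Real.exp ((q j - γ * μeq j) / lam)) :
    ∀ k, μstar k = μeq := by
  have hxnn : ∀ k i, (0:ℝ) ≤ μstar k i := fun k i => (hμstar_mem k).1 i
  have hxsum : ∀ k, ∑ i, μstar k i = 1 := fun k => (hμstar_mem k).2
  have hZ : 0 < ∑ j, Real.exp ((q j - γ * μeq j) / lam) :=
    Finset.sum_pos (fun j _ => Real.exp_pos _) ⟨⟨0, by omega⟩, Finset.mem_univ _⟩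
  have hL : ∀ i, lam * Real.log (μeq i)
      = q i - γ * μeq i - lam * Real.log (∑ j, Real.exp ((q j - γ * μeq j) / lam)) := by
    intro i
    have h1 : Real.log (μeq i) = (q i - γ * μeq i) / lam
        - Real.log (∑ j, Real.exp ((q j - γ * μeq j) / lam)) := by
      conv_lhs => rw [heq i]
      rw [Real.log_div (Real.exp_ne_zero _) (ne_of_gt hZ), Real.log_exp]
    rw [h1, mul_sub, mul_div_cancel₀ _ (ne_of_gt hlam)]
  -- total mass of F
  have hfsum : ∑ i, (∑ k, w k * μstar k i) = 1 := by
    rw [Finset.sum_comm]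
    calc ∑ k, ∑ i, w k * μstar k i = ∑ k, w k * ∑ i, μstar k i := by
          exact Finset.sum_congr rfl fun k _ => (Finset.mul_sum _ _ _).symm
      _ = 1 := by simp only [hxsum, mul_one, hwsum]
  -- swap lemmas
  have swapq : ∑ k, w k * ∑ i, q i * μstar k i = ∑ i, q i * ∑ k, w k * μstar k i := by
    simp only [Finset.mul_sum]
    rw [Finset.sum_comm]
    exact Finset.sum_congr rfl fun i _ => Finset.sum_congr rfl fun k _ => by ring
  have swapL : ∑ k, w k * ∑ i, μstar k i * Real.log (μeq i)
      = ∑ i, (∑ k, w k * μstar k i) * Real.log (μeq i) := by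
    simp only [Finset.mul_sum, Finset.sum_mul]
    rw [Finset.sum_comm]
    exact Finset.sum_congr rfl fun i _ => Finset.sum_congr rfl fun k _ => by ring
  have swap1 : ∑ k, w k * ∑ i, μstar k i = 1 := by
    simp only [hxsum, mul_one, hwsum]
  have swapmu : ∑ k, w k * ∑ i, μeq i = 1 := by
    simp only [hsum, mul_one, hwsum]
  -- split T
  have hTsplit : ∑ k, w k * ∑ i, (μstar k i * Real.log (μstar k i)
        - μstar k i * Real.log (μeq i) - μstar k i + μeq i)
      = (∑ k, w k * ∑ i, μstar k i * Real.log (μstar k i))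
        - (∑ k, w k * ∑ i, μstar k i * Real.log (μeq i))
        - (∑ k, w k * ∑ i, μstar k i) + (∑ k, w k * ∑ i, μeq i) := by
    rw [← Finset.sum_sub_distrib, ← Finset.sum_sub_distrib, ← Finset.sum_add_distrib]
    apply Finset.sum_congr rfl
    intro k _
    rw [Finset.sum_add_distrib, Finset.sum_sub_distrib, Finset.sum_sub_distrib]
    ring
  have hT2 : ∑ k, w k * ∑ i, (μstar k i * Real.log (μstar k i)
        - μstar k i * Real.log (μeq i) - μstar k i + μeq i)
      = (∑ k, w k * ∑ i, μstar k i * Real.log (μstar k i))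
        - ∑ i, (∑ k, w k * μstar k i) * Real.log (μeq i) := by
    rw [hTsplit, swapL, swap1, swapmu]; ring
  -- lam * ∑ F log μeq
  have hFL : lam * ∑ i, (∑ k, w k * μstar k i) * Real.log (μeq i)
      = (∑ i, (∑ k, w k * μstar k i) * (q i - γ * μeq i))
        - lam * Real.log (∑ j, Real.exp ((q j - γ * μeq j) / lam)) := by
    rw [Finset.mul_sum]
    calc ∑ i, lam * ((∑ k, w k * μstar k i) * Real.log (μeq i))
        = ∑ i, ((∑ k, w k * μstar k i) * (q i - γ * μeq i)
            - (∑ k, w k * μstar k i)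
              * (lam * Real.log (∑ j, Real.exp ((q j - γ * μeq j) / lam)))) := by
          refine Finset.sum_congr rfl fun i _ => ?_
          have := hL i
          linear_combination (∑ k, w k * μstar k i) * this
      _ = (∑ i, (∑ k, w k * μstar k i) * (q i - γ * μeq i))
          - (∑ i, (∑ k, w k * μstar k i))
              * (lam * Real.log (∑ j, Real.exp ((q j - γ * μeq j) / lam))) := by
          rw [Finset.sum_sub_distrib, Finset.sum_mul]
      _ = _ := by rw [hfsum]; ring
  have hML : lam * ∑ i, μeq i * Real.log (μeq i)
      = (∑ i, μeq i * (q i - γ * μeq i))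
        - lam * Real.log (∑ j, Real.exp ((q j - γ * μeq j) / lam)) := by
    rw [Finset.mul_sum]
    calc ∑ i, lam * (μeq i * Real.log (μeq i))
        = ∑ i, (μeq i * (q i - γ * μeq i)
            - μeq i * (lam * Real.log (∑ j, Real.exp ((q j - γ * μeq j) / lam)))) := by
          refine Finset.sum_congr rfl fun i _ => ?_
          have := hL i
          linear_combination μeq i * this
      _ = (∑ i, μeq i * (q i - γ * μeq i))
          - (∑ i, μeq i)
              * (lam * Real.log (∑ j, Real.exp ((q j - γ * μeq j) / lam))) := by
          rw [Finset.sum_sub_distrib, Finset.sum_mul]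
      _ = _ := by rw [hsum]; ring
  -- compare with constant profile μeq
  have hAB := hmin (fun _ => μeq) (fun k => ⟨fun i => (hpos i).le, hsum⟩)
  simp only [← Finset.sum_mul, hwsum, one_mul] at hAB
  -- expandA
  have expandA : (γ / 2) * ∑ i, (∑ k, w k * μstar k i) ^ 2
        - ∑ k, w k * ∑ i, q i * μstar k i
        + lam * ∑ k, w k * ∑ i, μstar k i * Real.log (μstar k i)
      = (∑ i, ((γ / 2) * (∑ k, w k * μstar k i) ^ 2 - q i * (∑ k, w k * μstar k i)))
        + lam * ∑ k, w k * ∑ i, μstar k i * Real.log (μstar k i) := by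
    rw [swapq, Finset.sum_sub_distrib, ← Finset.mul_sum]
  have expandB : (γ / 2) * ∑ i, (μeq i) ^ 2 - ∑ i, q i * μeq i
        + lam * ∑ i, μeq i * Real.log (μeq i)
      = (∑ i, ((γ / 2) * (μeq i) ^ 2 - q i * μeq i + μeq i * (q i - γ * μeq i)))
        - lam * Real.log (∑ j, Real.exp ((q j - γ * μeq j) / lam)) := by
    rw [hML, Finset.sum_add_distrib, Finset.sum_sub_distrib, ← Finset.mul_sum]
    ring
  have expandT : lam * ∑ k, w k * ∑ i, (μstar k i * Real.log (μstar k i)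
        - μstar k i * Real.log (μeq i) - μstar k i + μeq i)
      = lam * ∑ k, w k * ∑ i, μstar k i * Real.log (μstar k i)
        - ∑ i, (∑ k, w k * μstar k i) * (q i - γ * μeq i)
        + lam * Real.log (∑ j, Real.exp ((q j - γ * μeq j) / lam)) := by
    rw [hT2, mul_sub, hFL]; ring
  have hzero : ∑ i, ((γ / 2) * (∑ k, w k * μstar k i) ^ 2 - q i * (∑ k, w k * μstar k i))
        - (∑ i, ((γ / 2) * (μeq i) ^ 2 - q i * μeq i + μeq i * (q i - γ * μeq i)))
        - (γ / 2) * (∑ i, ((∑ k, w k * μstar k i) - μeq i) ^ 2)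
        + ∑ i, (∑ k, w k * μstar k i) * (q i - γ * μeq i) = 0 := by
    rw [Finset.mul_sum, ← Finset.sum_sub_distrib, ← Finset.sum_sub_distrib,
      ← Finset.sum_add_distrib]
    exact Finset.sum_eq_zero fun i _ => by ring
  -- nonnegativity
  have hSnn : 0 ≤ (γ / 2) * (∑ i, ((∑ k, w k * μstar k i) - μeq i) ^ 2) :=
    mul_nonneg (by linarith) (Finset.sum_nonneg fun i _ => sq_nonneg _)
  have hTnn : 0 ≤ ∑ k, w k * ∑ i, (μstar k i * Real.log (μstar k i)
      - μstar k i * Real.log (μeq i) - μstar k i + μeq i) :=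
    Finset.sum_nonneg fun k _ => mul_nonneg (hw k).le
      (Finset.sum_nonneg fun i _ => entropy_tangent_nonneg (hxnn k i) (hpos i))
  have hT0 : ∑ k, w k * ∑ i, (μstar k i * Real.log (μstar k i)
      - μstar k i * Real.log (μeq i) - μstar k i + μeq i) = 0 := by
    have hle : lam * ∑ k, w k * ∑ i, (μstar k i * Real.log (μstar k i)
        - μstar k i * Real.log (μeq i) - μstar k i + μeq i) ≤ 0 := by
      linarith [hAB, expandA, expandB, expandT, hzero, hSnn]
    nlinarith [hTnn, hlam, hle]
  -- extraction
  have hterms := (Finset.sum_eq_zero_iff_of_nonneg (fun k _ =>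
      mul_nonneg (hw k).le (Finset.sum_nonneg fun i _ =>
        entropy_tangent_nonneg (hxnn k i) (hpos i)))).1 hT0
  intro k
  funext i
  have hk := hterms k (Finset.mem_univ k)
  have hinner : ∑ i, (μstar k i * Real.log (μstar k i)
      - μstar k i * Real.log (μeq i) - μstar k i + μeq i) = 0 := by
    rcases mul_eq_zero.1 hk with h | h
    · exact absurd h (ne_of_gt (hw k))
    · exact h
  have hDi := (Finset.sum_eq_zero_iff_of_nonneg (fun i _ =>
      entropy_tangent_nonneg (hxnn k i) (hpos i))).1 hinner i (Finset.mem_univ i)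
  by_contra hne
  exact absurd hDi (ne_of_gt (entropy_tangent_pos (hxnn k i) (hpos i) hne))
end

section
/- Let M ≥ 1 and let a, b : Fin M → ℝ be two logit vectors. Define softmax(h)_i = exp(h_i) / ∑_j exp(h_j). Then ‖softmax(a) − softmax(b)‖₁ ≤ max_i (a_i − b_i) − min_i (a_i − b_i); that is, the L¹ distance between the two softmax outputs is bounded by the spread of the logit difference a − b. -/
open Real Finset

set_option maxHeartbeats 1000000 in
/-- Softmax logit-perturbation bound: for logit vectors `a, b`,
`‖softmax(a) − softmax(b)‖₁ ≤ max_i (a_i − b_i) − min_i (a_i − b_i)`. -/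
theorem softmax_l1_spread_bound
    (M : ℕ) (hM : 1 ≤ M) (a b : Fin M → ℝ) :
    (∑ i, |Real.exp (a i) / (∑ j, Real.exp (a j)) -
           Real.exp (b i) / (∑ j, Real.exp (b j))|)
    ≤ (⨆ i, (a i - b i)) - (⨅ i, (a i - b i)) := by
  haveI : NeZero M := ⟨by omega⟩
  have hne : (Finset.univ : Finset (Fin M)).Nonempty := ⟨⟨0, by omega⟩, Finset.mem_univ _⟩
  set Mx := ⨆ i, (a i - b i) with hMxdef
  set m := ⨅ i, (a i - b i) with hmdef
  have hdMx : ∀ i, a i - b i ≤ Mx := by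
    intro i; rw [hMxdef]
    exact le_ciSup (Set.Finite.bddAbove (Set.finite_range fun i => a i - b i)) i
  have hdm : ∀ i, m ≤ a i - b i := by
    intro i; rw [hmdef]
    exact ciInf_le (Set.Finite.bddBelow (Set.finite_range fun i => a i - b i)) i
  set A := ∑ j, Real.exp (a j) with hAdef
  set B := ∑ j, Real.exp (b j) with hBdef
  have hA : 0 < A := Finset.sum_pos (fun i _ => Real.exp_pos _) hne
  have hB : 0 < B := Finset.sum_pos (fun i _ => Real.exp_pos _) hne
  have hmMx : m ≤ Mx := le_trans (hdm ⟨0, by omega⟩) (hdMx ⟨0, by omega⟩)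
  rcases eq_or_lt_of_le hmMx with heq | hlt
  · -- degenerate case: all a i - b i equal
    have hall : ∀ i, a i = b i + m := fun i => by
      have h1 := hdm i; have h2 := hdMx i; rw [← heq] at h2; linarith
    have hAB : A = Real.exp m * B := by
      rw [hAdef, hBdef, Finset.mul_sum]
      exact Finset.sum_congr rfl (fun i _ => by rw [hall i, Real.exp_add]; ring)
    have hz : ∀ i, Real.exp (a i) / A - Real.exp (b i) / B = 0 := by
      intro i
      rw [hall i, hAB, Real.exp_add]
      field_simp
      ring
    have : (∑ i, |Real.exp (a i) / A - Real.exp (b i) / B|) = 0 := by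
      apply Finset.sum_eq_zero
      intro i _
      rw [hz i, abs_zero]
    rw [this, ← heq]
    linarith
  · set u := Real.exp (-m) with hudef
    set l := Real.exp (-Mx) with hldef
    have hl : 0 < l := Real.exp_pos _
    have hu : 0 < u := Real.exp_pos _
    have hlu : l < u := Real.exp_lt_exp.mpr (by linarith)
    have hpt : ∀ i, l * Real.exp (a i) ≤ Real.exp (b i) ∧
        Real.exp (b i) ≤ u * Real.exp (a i) := by
      intro i
      constructor
      · rw [hldef, ← Real.exp_add]
        exact Real.exp_le_exp.mpr (by linarith [hdMx i])
      · rw [hudef, ← Real.exp_add]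
        exact Real.exp_le_exp.mpr (by linarith [hdm i])
    have hlAB : l * A ≤ B := by
      rw [hAdef, hBdef, Finset.mul_sum]
      exact Finset.sum_le_sum (fun i _ => (hpt i).1)
    have hBuA : B ≤ u * A := by
      rw [hAdef, hBdef, Finset.mul_sum]
      exact Finset.sum_le_sum (fun i _ => (hpt i).2)
    set c : Fin M → ℝ := fun i => Real.exp (a i) * B - Real.exp (b i) * A with hcdef
    have hsumc : ∑ i, c i = 0 := by
      simp only [hcdef, Finset.sum_sub_distrib, ← Finset.sum_mul]
      rw [← hAdef, ← hBdef]; ring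
    have habs : ∑ i, |c i| = 2 * ∑ i, max (c i) 0 := by
      have h : ∀ i : Fin M, |c i| = 2 * max (c i) 0 - c i := by
        intro i
        rcases le_total (c i) 0 with h | h
        · rw [abs_of_nonpos h, max_eq_right h]; ring
        · rw [abs_of_nonneg h, max_eq_left h]; ring
      rw [Finset.sum_congr rfl (fun i _ => h i), Finset.sum_sub_distrib, hsumc, sub_zero,
        ← Finset.mul_sum]
    have hterm : ∀ i, (u - l) * max (c i) 0 ≤
        (B - l * A) * (u * Real.exp (a i) - Real.exp (b i)) := by
      intro i
      obtain ⟨h1, h2⟩ := hpt i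
      rcases le_or_gt (c i) 0 with hc | hc
      · rw [max_eq_right hc]
        have h3 : (0:ℝ) ≤ B - l * A := by linarith
        have h4 : (0:ℝ) ≤ u * Real.exp (a i) - Real.exp (b i) := by linarith
        nlinarith [mul_nonneg h3 h4]
      · rw [max_eq_left hc.le]
        have hid : (B - l * A) * (u * Real.exp (a i) - Real.exp (b i)) - (u - l) * c i =
            (u * A - B) * (Real.exp (b i) - l * Real.exp (a i)) := by
          simp only [hcdef]; ring
        nlinarith [mul_nonneg (sub_nonneg.2 hBuA) (sub_nonneg.2 h1), hid]
    have hsum2 : (u - l) * (∑ i, max (c i) 0) ≤ (B - l * A) * (u * A - B) := by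
      calc (u - l) * (∑ i, max (c i) 0) = ∑ i, (u - l) * max (c i) 0 := Finset.mul_sum _ _ _
        _ ≤ ∑ i, (B - l * A) * (u * Real.exp (a i) - Real.exp (b i)) :=
            Finset.sum_le_sum (fun i _ => hterm i)
        _ = (B - l * A) * (u * A - B) := by
            rw [← Finset.mul_sum, Finset.sum_sub_distrib, ← Finset.mul_sum, ← hAdef, ← hBdef]
    -- key analytic inequality
    have hlog1 : Real.log (B / (u * A)) ≤ B / (u * A) - 1 :=
      Real.log_le_sub_one_of_pos (by positivity)
    have hlog2 : Real.log ((l * A) / B) ≤ (l * A) / B - 1 :=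
      Real.log_le_sub_one_of_pos (by positivity)
    have hll : Real.log (B / (u * A)) + Real.log ((l * A) / B) = -(Mx - m) := by
      rw [← Real.log_mul (by positivity) (by positivity)]
      have : B / (u * A) * (l * A / B) = l / u := by
        rw [div_mul_div_comm, div_eq_div_iff (by positivity) (by positivity)]
        ring
      rw [this, Real.log_div hl.ne' hu.ne', hldef, hudef, Real.log_exp, Real.log_exp]
      ring
    have hR : 2 - B / (u * A) - (l * A) / B ≤ Mx - m := by linarith
    have hP : (u + l) * ((u * A - B) * (B - l * A)) ≤ A * B * (u - l) ^ 2 := by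
      nlinarith [sq_nonneg ((u + l) * B - 2 * u * l * A),
        mul_nonneg (mul_nonneg hu.le hl.le) (sq_nonneg (A * (u - l))), mul_pos hu hl]
    have e1 : A * B * (u - l) * (2 - B / (u * A) - (l * A) / B) * u =
        (u - l) * (2 * u * A * B - B ^ 2 - l * u * A ^ 2) := by
      field_simp
    have h4 : 2 * u * ((B - l * A) * (u * A - B)) ≤
        (u - l) * (2 * u * A * B - B ^ 2 - l * u * A ^ 2) := by
      nlinarith [hP]
    have hkey : 2 * ((B - l * A) * (u * A - B)) ≤ A * B * (u - l) * (Mx - m) := by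
      have step1 : 2 * ((B - l * A) * (u * A - B)) ≤
          A * B * (u - l) * (2 - B / (u * A) - (l * A) / B) := by
        have h5 : 2 * ((B - l * A) * (u * A - B)) * u ≤
            A * B * (u - l) * (2 - B / (u * A) - (l * A) / B) * u := by
          rw [e1]; nlinarith [h4]
        exact le_of_mul_le_mul_right h5 hu
      calc 2 * ((B - l * A) * (u * A - B)) ≤
          A * B * (u - l) * (2 - B / (u * A) - (l * A) / B) := step1
        _ ≤ A * B * (u - l) * (Mx - m) := by
            exact mul_le_mul_of_nonneg_left hR
              (mul_nonneg (mul_pos hA hB).le (by linarith))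
    -- assemble
    have hLHS : (∑ i, |Real.exp (a i) / A - Real.exp (b i) / B|) = (∑ i, |c i|) / (A * B) := by
      rw [Finset.sum_div]
      apply Finset.sum_congr rfl
      intro i _
      have hdiff : Real.exp (a i) / A - Real.exp (b i) / B = c i / (A * B) := by
        rw [hcdef]
        field_simp
      rw [hdiff, abs_div, abs_of_pos (mul_pos hA hB)]
    rw [hLHS, div_le_iff₀ (mul_pos hA hB)]
    have hfin : (u - l) * (∑ i, |c i|) ≤ (u - l) * ((Mx - m) * (A * B)) := by
      rw [habs]
      calc (u - l) * (2 * ∑ i, max (c i) 0) = 2 * ((u - l) * ∑ i, max (c i) 0) := by ring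
        _ ≤ 2 * ((B - l * A) * (u * A - B)) := by linarith [hsum2]
        _ ≤ A * B * (u - l) * (Mx - m) := hkey
        _ = (u - l) * ((Mx - m) * (A * B)) := by ring
    exact le_of_mul_le_mul_left hfin (by linarith)
end
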